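/- arXiv:1403.1836 — 7 statements merged into one kernel-verified Lean document; each statement's English description precedes it below -/
import Mathlib

section
/- Let p = 1/2, let x₂ > 0, set z = √(1 + x₂) − √(x₂) ∈ (0, 1], and let x₁ ∈ (0, 1). Then the ordered pairing has strictly lower cost than the other pairing, i.e. √(1 − x₁) + √(x₂) < √(1 + x₂) + √(x₁), if and only if x₁ > (1/2)·(1 − √(2z² − z⁴)). -/
/-! With `f x = √(1 - x) - √x`, the ordered pairing is cheaper exactly when `f x₁ < z`.
The function `f` is strictly decreasing, and on `[0, 1/2]` it is inverted by
`z ↦ (1 - √(2z² - z⁴)) / 2`: writing `s = √(2 - z²)`, that point equals `((s - z) / 2)²` and one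
minus it equals `((s + z) / 2)²`. Since `0 ≤ z ≤ 1`, the condition becomes
`x₁ > (1 - √(2z² - z⁴)) / 2`. -/

open Real

theorem strictAnti_sqrt_one_sub_sub_sqrt : StrictAnti fun x : ℝ => √(1 - x) - √x := by
  intro a b hab
  show √(1 - b) - √b < √(1 - a) - √a
  by_cases hb : 0 < b
  · have h₁ : √a < √b := (sqrt_lt_sqrt_iff_of_pos hb).2 hab
    have h₂ : √(1 - b) ≤ √(1 - a) := sqrt_le_sqrt (by linarith)
    linarith
  · have h₁ : √(1 - b) < √(1 - a) := sqrt_lt_sqrt (by linarith) (by linarith)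
    have h₂ : √b = 0 := sqrt_eq_zero'.2 (not_lt.1 hb)
    have h₃ : √a = 0 := sqrt_eq_zero'.2 (by linarith)
    linarith

theorem sqrt_one_sub_sub_sqrt_of_half_one_sub_sqrt {z : ℝ} (hz₀ : 0 ≤ z) (hz₁ : z ≤ 1) :
    √(1 - 1 / 2 * (1 - √(2 * z ^ 2 - z ^ 4))) - √(1 / 2 * (1 - √(2 * z ^ 2 - z ^ 4))) = z := by
  set s := √(2 - z ^ 2)
  have hs : s ^ 2 = 2 - z ^ 2 := sq_sqrt (by nlinarith)
  have hzs : z ≤ s := le_sqrt_of_sq_le (by nlinarith)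
  have hw : √(2 * z ^ 2 - z ^ 4) = z * s := by
    rw [show 2 * z ^ 2 - z ^ 4 = z ^ 2 * (2 - z ^ 2) by ring, sqrt_mul (sq_nonneg z),
      sqrt_sq hz₀]
  rw [hw, show 1 / 2 * (1 - z * s) = ((s - z) / 2) ^ 2 by linear_combination (-1 / 4) * hs,
    show 1 - ((s - z) / 2) ^ 2 = ((s + z) / 2) ^ 2 by linear_combination (-1 / 2) * hs,
    sqrt_sq (by linarith), sqrt_sq (by linarith)]
  ring

theorem sqrt_one_add_sub_sqrt_nonneg (x : ℝ) : 0 ≤ √(1 + x) - √x :=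
  sub_nonneg.2 (sqrt_le_sqrt (by linarith))

theorem sqrt_one_add_sub_sqrt_le_one (x : ℝ) : √(1 + x) - √x ≤ 1 := by
  have : √(1 + x) ≤ 1 + √x := by
    rw [sqrt_le_left (by positivity)]
    rcases le_or_gt 0 x with hx | hx
    · nlinarith [sq_sqrt hx, sqrt_nonneg x]
    · nlinarith [sqrt_nonneg x]
  linarith

theorem ordered_pairing_cheaper_iff_sqrt_case_general
    (x₁ x₂ : ℝ)
    (z : ℝ) (hz : z = Real.sqrt (1 + x₂) - Real.sqrt x₂) :
    Real.sqrt (1 - x₁) + Real.sqrt x₂ < Real.sqrt (1 + x₂) + Real.sqrt x₁ ↔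
      x₁ > (1 / 2) * (1 - Real.sqrt (2 * z ^ 2 - z ^ 4)) := by
  have hz₀ : 0 ≤ z := hz ▸ sqrt_one_add_sub_sqrt_nonneg x₂
  have hz₁ : z ≤ 1 := hz ▸ sqrt_one_add_sub_sqrt_le_one x₂
  rw [gt_iff_lt, ← strictAnti_sqrt_one_sub_sub_sqrt.lt_iff_gt (a := x₁),
    sqrt_one_sub_sub_sqrt_of_half_one_sub_sqrt hz₀ hz₁, hz]
  constructor <;> intro h <;> linarith

/-- For `p = 1/2`, in the alternating pattern red–blue–red–blue with
`0 < x₁ < 1` and `x₂ > 0`, setting `z = √(1 + x₂) − √x₂`, the ordered pairing is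
strictly cheaper, i.e. `√(1 − x₁) + √x₂ < √(1 + x₂) + √x₁`, if and only if
`x₁ > (1/2)·(1 − √(2z² − z⁴))`. -/
theorem ordered_pairing_cheaper_iff_sqrt_case
    (x₁ x₂ : ℝ) (hx₁ : 0 < x₁) (hx₁' : x₁ < 1) (hx₂ : 0 < x₂)
    (z : ℝ) (hz : z = Real.sqrt (1 + x₂) - Real.sqrt x₂) :
    Real.sqrt (1 - x₁) + Real.sqrt x₂ < Real.sqrt (1 + x₂) + Real.sqrt x₁ ↔
      x₁ > (1 / 2) * (1 - Real.sqrt (2 * z ^ 2 - z ^ 4)) :=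
  ordered_pairing_cheaper_iff_sqrt_case_general x₁ x₂ z hz
end

section
/- For every real p > 1, every optimal matching is ordered: if π is an injection from {1,...,N} to {1,...,M} minimizing E_p, then π is strictly increasing. -/
/-!
If `π` matched `i < j` to crossing blue points `b (π j) < b (π i)`, swapping the two partners
would change only two terms of the cost. The four displacements involved satisfy
`(b (π j) - r i) + (b (π i) - r j) = (b (π i) - r i) + (b (π j) - r j)`, and the uncrossed pair
lies strictly between the crossed one, so strict convexity of `|x| ^ p` makes the swap strictly
cheaper, contradicting optimality.
-/

open Finset Set

theorem StrictConvexOn.comp_abs {f : ℝ → ℝ} (hf : StrictConvexOn ℝ (Ici 0) f)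
    (hf_mono : StrictMonoOn f (Ici 0)) : StrictConvexOn ℝ univ fun x => f |x| := by
  refine ⟨convex_univ, fun x _ y _ hxy a c ha hc hac => ?_⟩
  simp only [smul_eq_mul]
  rcases eq_or_ne |x| |y| with habs | habs
  · have hy : y = -x := by linarith [(abs_eq_abs.1 habs).resolve_left hxy]
    have hx : x ≠ 0 := by rintro rfl; simp [hy] at hxy
    have hac_lt : |a - c| < 1 := abs_lt.2 ⟨by linarith, by linarith⟩
    have hshrink : |a * x + c * y| < |x| := by
      rw [hy, show a * x + c * -x = (a - c) * x by ring, abs_mul]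
      exact mul_lt_of_lt_one_left (abs_pos.2 hx) hac_lt
    calc f |a * x + c * y| < f |x| :=
          hf_mono (mem_Ici.2 (abs_nonneg _)) (mem_Ici.2 (abs_nonneg _)) hshrink
      _ = a * f |x| + c * f |y| := by rw [← habs, ← add_mul, hac, one_mul]
  · have htri : |a * x + c * y| ≤ a * |x| + c * |y| := by
      simpa [abs_mul, abs_of_pos ha, abs_of_pos hc] using abs_add_le (a * x) (c * y)
    calc f |a * x + c * y| ≤ f (a * |x| + c * |y|) :=
          hf_mono.monotoneOn (mem_Ici.2 (abs_nonneg _)) (mem_Ici.2 (by positivity)) htri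
      _ < a * f |x| + c * f |y| := hf.2 (abs_nonneg x) (abs_nonneg y) habs ha hc hac

theorem strictConvexOn_abs_rpow {p : ℝ} (hp : 1 < p) :
    StrictConvexOn ℝ univ fun x : ℝ => |x| ^ p :=
  (strictConvexOn_rpow hp).comp_abs (Real.strictMonoOn_rpow_Ici_of_exponent_pos (by linarith))

theorem StrictConvexOn.add_lt_add_of_mem_Ioo {f : ℝ → ℝ} {s : Set ℝ}
    (hf : StrictConvexOn ℝ s f) {x y a b : ℝ} (hx : x ∈ s) (hy : y ∈ s) (ha : a ∈ Ioo x y) (hsum : a + b = x + y) :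
    f a + f b < f x + f y := by
  obtain ⟨hxa, hay⟩ := ha
  have hxy : x < y := hxa.trans hay
  have hlen : 0 < y - x := sub_pos.2 hxy
  set t := (y - a) / (y - x)
  have ht : 0 < t := div_pos (by linarith) hlen
  have ht' : 0 < 1 - t := by
    rw [sub_pos, div_lt_one hlen]
    linarith
  have ha_eq : t • x + (1 - t) • y = a := by
    simp only [smul_eq_mul, t]
    field_simp [hlen.ne']
    ring
  have hb_eq : (1 - t) • x + t • y = b := by
    simp only [smul_eq_mul, t]
    field_simp [hlen.ne']
    rw [show b = x + y - a by linarith]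
    ring
  have hfa := hf.2 hx hy hxy.ne ht ht' (by ring)
  have hfb := hf.2 hx hy hxy.ne ht' ht (by ring)
  rw [ha_eq] at hfa
  rw [hb_eq] at hfb
  simp only [smul_eq_mul] at hfa hfb
  linarith

theorem StrictConvexOn.uncross_lt {f : ℝ → ℝ} (hf : StrictConvexOn ℝ univ f) {a b c d : ℝ}
    (hab : a < b) (hcd : c < d) : f (c - a) + f (d - b) < f (d - a) + f (c - b) := by
  rw [add_comm (f (d - a))]
  exact hf.add_lt_add_of_mem_Ioo (mem_univ _) (mem_univ _)
    ⟨by linarith, by linarith⟩ (by ring)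

theorem sum_comp_swap_sub_sum {ι κ M : Type*} [Fintype ι] [DecidableEq ι] [AddCommGroup M]
    (c : ι → κ → M) (π : ι → κ) (i j : ι) :
    ∑ k, c k (π (Equiv.swap i j k)) - ∑ k, c k (π k)
      = c i (π j) + c j (π i) - (c i (π i) + c j (π j)) := by
  rcases eq_or_ne i j with rfl | hij
  · simp
  rw [← sum_sub_distrib, Fintype.sum_eq_add i j hij]
  · simp only [Equiv.swap_apply_left, Equiv.swap_apply_right]
    abel
  · rintro k ⟨hki, hkj⟩
    rw [Equiv.swap_apply_of_ne_of_ne hki hkj, sub_self]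

open Finset in
theorem optimal_matching_ordered_of_one_lt_exponent_general
    (p : ℝ) (hp : 1 < p) (N M : ℕ)
    (r : Fin N → ℝ) (b : Fin M → ℝ)
    (hr : StrictMono r) (hb : StrictMono b)
    (π : Fin N → Fin M) (hπ : Function.Injective π)
    (hopt : ∀ π' : Fin N → Fin M, Function.Injective π' →
      ∑ i, |b (π i) - r i| ^ p ≤ ∑ i, |b (π' i) - r i| ^ p) :
    StrictMono π := by
  intro i j hij
  refine (hπ.ne hij.ne).lt_of_le ?_
  by_contra! hcross
  have hswap := hopt _ (hπ.comp (Equiv.swap i j).injective)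
  have hcost := sum_comp_swap_sub_sum (fun k l => |b l - r k| ^ p) π i j
  have huncross := (strictConvexOn_abs_rpow hp).uncross_lt (hr hij) (hb hcross)
  simp only [Function.comp_apply] at hswap hcost huncross
  linarith

open Finset in
/-- For `p > 1`, every optimal matching (injection of the `N` red points, listed in
increasing order, into the `M ≥ N` blue points, listed in increasing order, minimizing
`∑ i, |b (π i) − r i|^p`) is ordered, i.e. strictly increasing. -/
theorem optimal_matching_ordered_of_one_lt_exponent
    (p : ℝ) (hp : 1 < p) (N M : ℕ) (hNM : N ≤ M)
    (r : Fin N → ℝ) (b : Fin M → ℝ)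
    (hr : StrictMono r) (hb : StrictMono b)
    (hdist : ∀ i j, r i ≠ b j)
    (π : Fin N → Fin M) (hπ : Function.Injective π)
    (hopt : ∀ π' : Fin N → Fin M, Function.Injective π' →
      ∑ i, |b (π i) - r i| ^ p ≤ ∑ i, |b (π' i) - r i| ^ p) :
    StrictMono π :=
  optimal_matching_ordered_of_one_lt_exponent_general p hp N M r b hr hb π hπ hopt
end

section
/- For every real p with 0 < p < 1, every optimal matching is non-crossing: if π is an injection from {1,...,N} to {1,...,M} minimizing E_p, then no two edges of π cross. -/
/-!
Uncrossing two crossing edges strictly lowers the cost when `x ↦ x ^ p` is strictly concave and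
increasing on `[0, ∞)`. If the two edges point the same way, the swapped edge lengths are
squeezed between the original ones with the same total, and strict concavity makes the swapped
cost smaller; if they point opposite ways, each swapped edge is strictly shorter than one of the
original edges. So a crossing optimal matching could be improved by a transposition.
-/

open Finset Set

theorem StrictConcaveOn.add_lt_add_of_add_eq {s : Set ℝ} {f : ℝ → ℝ}
    (hf : StrictConcaveOn ℝ s f) {a b c d : ℝ} (ha : a ∈ s) (hd : d ∈ s)
    (hab : a < b) (hac : a < c) (hsum : a + d = b + c) :
    f a + f d < f b + f c := by
  have had : a < d := by linarith
  have hda : d - a ≠ 0 := (sub_pos.2 had).ne'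
  set t := (d - b) / (d - a) with ht
  have ht0 : 0 < t := div_pos (by linarith) (by linarith)
  have ht1 : 0 < 1 - t := by
    rw [sub_pos, ht, div_lt_one (by linarith)]
    linarith
  have hb : t • a + (1 - t) • d = b := by
    simp only [smul_eq_mul, ht]; field_simp; ring
  have hc : (1 - t) • a + t • d = c := by
    simp only [smul_eq_mul, ht]; field_simp; linear_combination (d - a) * hsum
  have h₁ := hf.2 ha hd had.ne ht0 ht1 (by ring)
  have h₂ := hf.2 ha hd had.ne ht1 ht0 (by ring)
  rw [hb] at h₁
  rw [hc] at h₂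
  simp only [smul_eq_mul] at h₁ h₂
  linarith

theorem add_abs_sub_lt_of_crossing {f : ℝ → ℝ} (hconc : StrictConcaveOn ℝ (Ici 0) f)
    (hmono : StrictMonoOn f (Ici 0)) {A B C D : ℝ}
    (h₁ : min A B < min C D) (h₂ : min C D < max A B) (h₃ : max A B < max C D) :
    f |D - A| + f |B - C| < f |B - A| + f |D - C| := by
  have f_lt_f {x y : ℝ} (hx : 0 ≤ x) (hxy : x < y) : f x < f y :=
    hmono (mem_Ici.2 hx) (mem_Ici.2 (by linarith)) hxy
  rcases le_total A B with hAB | hAB <;> rcases le_total C D with hCD | hCD <;>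
    simp only [min_eq_left, min_eq_right, max_eq_left, max_eq_right, hAB, hCD] at h₁ h₂ h₃
  · rw [abs_of_pos (by linarith), abs_of_pos (by linarith), abs_of_nonneg (sub_nonneg.2 hAB),
      abs_of_nonneg (sub_nonneg.2 hCD)]
    have := hconc.add_lt_add_of_add_eq (mem_Ici.2 (by linarith : (0 : ℝ) ≤ B - C))
      (mem_Ici.2 (by linarith : (0 : ℝ) ≤ D - A)) (by linarith : B - C < B - A)
      (by linarith : B - C < D - C) (by ring)
    linarith
  · rw [abs_of_pos (by linarith), abs_of_neg (by linarith), abs_of_nonneg (sub_nonneg.2 hAB),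
      abs_of_nonpos (by linarith)]
    exact add_lt_add (f_lt_f (by linarith) (by linarith))
      (f_lt_f (by linarith) (by linarith))
  · rw [abs_of_pos (by linarith), abs_of_neg (by linarith), abs_of_nonpos (by linarith),
      abs_of_nonneg (sub_nonneg.2 hCD)]
    have := f_lt_f (by linarith : (0 : ℝ) ≤ D - A) (by linarith : D - A < D - C)
    have := f_lt_f (by linarith : (0 : ℝ) ≤ -(B - C)) (by linarith : -(B - C) < -(B - A))
    linarith
  · rw [abs_of_neg (by linarith), abs_of_neg (by linarith), abs_of_nonpos (sub_nonpos.2 hAB),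
      abs_of_nonpos (by linarith)]
    have := hconc.add_lt_add_of_add_eq (mem_Ici.2 (by linarith : (0 : ℝ) ≤ -(D - A)))
      (mem_Ici.2 (by linarith : (0 : ℝ) ≤ -(B - C))) (by linarith : -(D - A) < -(B - A))
      (by linarith : -(D - A) < -(D - C)) (by ring)
    linarith

theorem sum_comp_swap_add {ι α β : Type*} [Fintype ι] [DecidableEq ι] [AddCommMonoid β]
    (c : ι → α → β) (π : ι → α) {i j : ι} (hij : i ≠ j) :
    ∑ k, c k (π (Equiv.swap i j k)) + (c i (π i) + c j (π j)) =
      ∑ k, c k (π k) + (c i (π j) + c j (π i)) := by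
  have hrest : ∑ k ∈ univ \ {i, j}, c k (π (Equiv.swap i j k)) =
      ∑ k ∈ univ \ {i, j}, c k (π k) := by
    refine sum_congr rfl fun k hk => ?_
    simp only [Finset.mem_sdiff, Finset.mem_univ, Finset.mem_insert, Finset.mem_singleton,
      true_and, not_or] at hk
    rw [Equiv.swap_apply_of_ne_of_ne hk.1 hk.2]
  rw [← sum_sdiff (subset_univ {i, j}),
    ← sum_sdiff (subset_univ {i, j}) (f := fun k => c k (π k)), hrest,
    sum_pair hij, sum_pair hij, Equiv.swap_apply_left, Equiv.swap_apply_right]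
  abel

open Finset in
theorem optimal_matching_noncrossing_of_exponent_lt_one_general
    (p : ℝ) (hp0 : 0 < p) (hp1 : p < 1) (N M : ℕ)
    (r : Fin N → ℝ) (b : Fin M → ℝ)
    (π : Fin N → Fin M) (hπ : Function.Injective π)
    (hopt : ∀ π' : Fin N → Fin M, Function.Injective π' →
      ∑ i, |b (π i) - r i| ^ p ≤ ∑ i, |b (π' i) - r i| ^ p) :
    ∀ i j : Fin N, i ≠ j →
      ¬ (min (r i) (b (π i)) < min (r j) (b (π j)) ∧
         min (r j) (b (π j)) < max (r i) (b (π i)) ∧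
         max (r i) (b (π i)) < max (r j) (b (π j))) := by
  rintro i j hij ⟨h₁, h₂, h₃⟩
  have hswap := hopt _ (hπ.comp (Equiv.swap i j).injective)
  have hcost := sum_comp_swap_add (fun k m => |b m - r k| ^ p) π hij
  have huncross := add_abs_sub_lt_of_crossing (Real.strictConcaveOn_rpow hp0 hp1)
    (Real.strictMonoOn_rpow_Ici_of_exponent_pos hp0) h₁ h₂ h₃
  simp only [Function.comp_apply] at hswap hcost
  linarith

open Finset in
/-- For `0 < p < 1`, every optimal matching (injection of the `N` red points into the
`M ≥ N` blue points minimizing `∑ i, |b (π i) − r i|^p`) is non-crossing: no two of its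
edges, viewed as intervals with endpoints `r i` and `b (π i)`, cross. -/
theorem optimal_matching_noncrossing_of_exponent_lt_one
    (p : ℝ) (hp0 : 0 < p) (hp1 : p < 1) (N M : ℕ) (hNM : N ≤ M)
    (r : Fin N → ℝ) (b : Fin M → ℝ)
    (hr : StrictMono r) (hb : StrictMono b)
    (hdist : ∀ i j, r i ≠ b j)
    (π : Fin N → Fin M) (hπ : Function.Injective π)
    (hopt : ∀ π' : Fin N → Fin M, Function.Injective π' →
      ∑ i, |b (π i) - r i| ^ p ≤ ∑ i, |b (π' i) - r i| ^ p) :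
    ∀ i j : Fin N, i ≠ j →
      ¬ (min (r i) (b (π i)) < min (r j) (b (π j)) ∧
         min (r j) (b (π j)) < max (r i) (b (π i)) ∧
         max (r i) (b (π i)) < max (r j) (b (π j))) :=
  optimal_matching_noncrossing_of_exponent_lt_one_general p hp0 hp1 N M r b π hπ hopt
end

section
/- Let p = 1. If all 2L points r₁,...,r_L, b₁,...,b_L together with their antipodes (the points x + 1/2 taken modulo 1) are pairwise distinct, then there exists a cyclic optimal matching. -/
/-- Distance on the circle of unit circumference, for points represented in `[0,1)`. -/
noncomputable def circleDist (x y : ℝ) : ℝ := min |x - y| (1 - |x - y|)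

/-- The antipode of a point of `[0,1)`: the point `x + 1/2` taken modulo `1`. -/
noncomputable def antipode (x : ℝ) : ℝ := if x + 1/2 < 1 then x + 1/2 else x + 1/2 - 1

/-- An ordered triple of pairwise distinct points of `[0,1)` is cyclically oriented if
the points appear in counter-clockwise order. -/
def CyclicallyOriented (x y z : ℝ) : Prop :=
  (x < y ∧ y < z) ∨ (y < z ∧ z < x) ∨ (z < x ∧ x < y)

/-!
Let `F t = #{i | r i ≤ t} - #{i | b i ≤ t}`. Each circle distance `d(u, v)` equals
`∫₀¹ |1[u ≤ t] - 1[v ≤ t] - e| dt` for a suitable integer `e`, so by the triangle inequality every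
matching costs at least `∫₀¹ |F t - c| dt` for some integer `c`, hence at least the value of this
integral at an integer median `c` of `F`, which can be chosen so that `{F = c}` has positive
measure. Conversely, cut the circle at a point `t₀` that is not one of the given points and has
`F t₀ = c`, and match the reds and blues in increasing order starting from `t₀`. On the cut-open circle this monotone matching costs exactly
`∫₀¹ |F t - F t₀| dt` (all the terms `1[x_k ≤ t] - 1[y_k ≤ t]` have the same sign), and circle
distances are at most line distances, so it is optimal. It preserves the linear order of the
rotated points, hence the cyclic order of the original ones.
-/

open MeasureTheory Set Finset

namespace CircleMatching

lemma fract_sub_eq_ite {u v : ℝ} (hu : u ∈ Ico (0 : ℝ) 1) (hv : v ∈ Ico (0 : ℝ) 1) :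
    Int.fract (v - u) = if u ≤ v then v - u else v - u + 1 := by
  obtain ⟨hu0, hu1⟩ := hu
  obtain ⟨hv0, hv1⟩ := hv
  split_ifs with h
  · exact Int.fract_eq_self.2 ⟨by linarith, by linarith⟩
  · exact Int.fract_eq_iff.2 ⟨by linarith, by linarith, -1, by push_cast; ring⟩

lemma fract_fract_sub_fract_sub (u v t : ℝ) :
    Int.fract (Int.fract (v - t) - Int.fract (u - t)) = Int.fract (v - u) :=
  Int.fract_eq_fract.2 ⟨⌊u - t⌋ - ⌊v - t⌋, by push_cast [Int.fract]; ring⟩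

lemma fract_sub_mem_Ico (u t : ℝ) : Int.fract (u - t) ∈ Ico (0 : ℝ) 1 :=
  ⟨Int.fract_nonneg _, Int.fract_lt_one _⟩

lemma fract_sub_injOn (t : ℝ) : InjOn (fun u => Int.fract (u - t)) (Ico 0 1) := by
  intro u hu v hv huv
  have h := fract_fract_sub_fract_sub u v t
  rw [show Int.fract (u - t) = Int.fract (v - t) from huv, sub_self, Int.fract_zero,
    fract_sub_eq_ite hu hv] at h
  split_ifs at h <;> linarith [hu.2, hv.1]

lemma circleDist_eq_min_fract {u v : ℝ} (hu : u ∈ Ico (0 : ℝ) 1) (hv : v ∈ Ico (0 : ℝ) 1) :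
    circleDist u v = min (Int.fract (v - u)) (Int.fract (u - v)) := by
  rw [circleDist, fract_sub_eq_ite hu hv, fract_sub_eq_ite hv hu]
  rcases lt_trichotomy u v with h | rfl | h
  · simp only [abs_of_neg (sub_neg.2 h), h.le, not_le.2 h, if_true, if_false]
    congr 1 <;> ring
  · simp
  · simp only [abs_of_pos (sub_pos.2 h), h.le, not_le.2 h, if_true, if_false]
    rw [min_comm]; congr 1; ring

lemma circleDist_fract_sub {u v : ℝ} (hu : u ∈ Ico (0 : ℝ) 1) (hv : v ∈ Ico (0 : ℝ) 1) (t : ℝ) :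
    circleDist (Int.fract (u - t)) (Int.fract (v - t)) = circleDist u v := by
  rw [circleDist_eq_min_fract (fract_sub_mem_Ico u t) (fract_sub_mem_Ico v t),
    circleDist_eq_min_fract hu hv, fract_fract_sub_fract_sub, fract_fract_sub_fract_sub]

lemma circleDist_le_abs_sub (u v : ℝ) : circleDist u v ≤ |u - v| := min_le_left _ _

lemma cyclicallyOriented_iff_fract {x y z : ℝ} (hx : x ∈ Ico (0 : ℝ) 1)
    (hy : y ∈ Ico (0 : ℝ) 1) (hz : z ∈ Ico (0 : ℝ) 1) (hxy : x ≠ y) (hyz : y ≠ z) (hxz : x ≠ z) :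
    CyclicallyOriented x y z ↔
      Int.fract (y - x) + Int.fract (z - y) + Int.fract (x - z) = 1 := by
  rw [fract_sub_eq_ite hx hy, fract_sub_eq_ite hy hz, fract_sub_eq_ite hz hx, CyclicallyOriented]
  grind

lemma cyclicallyOriented_fract_sub_iff {x y z : ℝ} (hx : x ∈ Ico (0 : ℝ) 1)
    (hy : y ∈ Ico (0 : ℝ) 1) (hz : z ∈ Ico (0 : ℝ) 1) (hxy : x ≠ y) (hyz : y ≠ z) (hxz : x ≠ z)
    (t : ℝ) :
    CyclicallyOriented (Int.fract (x - t)) (Int.fract (y - t)) (Int.fract (z - t)) ↔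
      CyclicallyOriented x y z := by
  have hne {u v : ℝ} (hu : u ∈ Ico (0 : ℝ) 1) (hv : v ∈ Ico (0 : ℝ) 1) (huv : u ≠ v) :
      Int.fract (u - t) ≠ Int.fract (v - t) := fun h => huv (fract_sub_injOn t hu hv h)
  rw [cyclicallyOriented_iff_fract (fract_sub_mem_Ico x t) (fract_sub_mem_Ico y t)
      (fract_sub_mem_Ico z t) (hne hx hy hxy) (hne hy hz hyz) (hne hx hz hxz),
    cyclicallyOriented_iff_fract hx hy hz hxy hyz hxz, fract_fract_sub_fract_sub,
    fract_fract_sub_fract_sub, fract_fract_sub_fract_sub]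

lemma cyclicallyOriented_congr_of_lt_iff {ι : Type*} {x y : ι → ℝ}
    (h : ∀ i j, x i < x j ↔ y i < y j) (i j k : ι) :
    CyclicallyOriented (x i) (x j) (x k) ↔ CyclicallyOriented (y i) (y j) (y k) := by
  simp only [CyclicallyOriented, h]

instance : IsProbabilityMeasure (volume.restrict (Ico (0 : ℝ) 1)) :=
  ⟨by simp⟩

noncomputable def step (u t : ℝ) : ℝ := if u ≤ t then 1 else 0

lemma measurable_step (u : ℝ) : Measurable (step u) :=
  Measurable.ite measurableSet_Ici measurable_const measurable_const

lemma integrable_step {μ : Measure ℝ} [IsFiniteMeasure μ] (u : ℝ) : Integrable (step u) μ :=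
  .of_bound (measurable_step u).aestronglyMeasurable 1
    (.of_forall fun t => by unfold step; split_ifs <;> simp)

lemma step_sub_step_eq_indicator {u v : ℝ} (huv : u ≤ v) (t : ℝ) :
    step u t - step v t = (Ico u v).indicator 1 t := by
  simp only [step, indicator, Set.mem_Ico, Pi.one_apply]
  split_ifs <;> grind

lemma integral_abs_step_sub_step {u v : ℝ} (hu : 0 ≤ u) (huv : u ≤ v) (hv : v ≤ 1) :
    ∫ t in Ico 0 1, |step u t - step v t| = v - u := by
  simp_rw [step_sub_step_eq_indicator huv]
  rw [integral_congr_ae (.of_forall fun t => abs_of_nonneg (indicator_nonneg (by simp) t)),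
    integral_indicator_one measurableSet_Ico, measureReal_restrict_apply measurableSet_Ico,
    inter_eq_left.2 (Ico_subset_Ico hu hv), Real.volume_real_Ico_of_le huv]

lemma integral_abs_step_sub_step_sub_one {u v : ℝ} (hu : 0 ≤ u) (huv : u ≤ v) (hv : v ≤ 1) :
    ∫ t in Ico 0 1, |step u t - step v t - 1| = 1 - (v - u) := by
  have h (t : ℝ) : |step u t - step v t - 1| = 1 - |step u t - step v t| := by
    rw [step_sub_step_eq_indicator huv]
    by_cases ht : t ∈ Ico u v <;> simp [ht]
  simp_rw [h]
  have hint : Integrable (fun t => |step u t - step v t|) (volume.restrict (Ico (0 : ℝ) 1)) :=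
    ((integrable_step u).sub (integrable_step v)).abs
  rw [integral_sub (integrable_const 1) hint, integral_abs_step_sub_step hu huv hv]
  simp

lemma abs_sub_eq_integral_abs_step_sub_step {u v : ℝ} (hu : u ∈ Ico (0 : ℝ) 1)
    (hv : v ∈ Ico (0 : ℝ) 1) :
    |u - v| = ∫ t in Ico 0 1, |step u t - step v t| := by
  rcases le_total u v with huv | hvu
  · rw [integral_abs_step_sub_step hu.1 huv hv.2.le, abs_sub_comm, abs_of_nonneg (by linarith)]
  · simp_rw [abs_sub_comm (step u _)]
    rw [integral_abs_step_sub_step hv.1 hvu hu.2.le, abs_of_nonneg (by linarith)]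

lemma exists_integral_abs_step_sub_step_sub_eq_circleDist {u v : ℝ} (hu : u ∈ Ico (0 : ℝ) 1)
    (hv : v ∈ Ico (0 : ℝ) 1) :
    ∃ e : ℤ, ∫ t in Ico 0 1, |step u t - step v t - e| = circleDist u v := by
  wlog huv : u ≤ v generalizing u v
  · obtain ⟨e, he⟩ := this hv hu (le_of_not_ge huv)
    refine ⟨-e, ?_⟩
    rw [circleDist, abs_sub_comm, ← circleDist, ← he]
    congr 1 with t
    rw [← abs_neg]
    push_cast
    ring_nf
  have hd : |u - v| = v - u := by rw [abs_sub_comm, abs_of_nonneg (by linarith)]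
  rcases min_choice |u - v| (1 - |u - v|) with h | h
  · exact ⟨0, by rw [circleDist, h, hd, ← integral_abs_step_sub_step hu.1 huv hv.2.le]; simp⟩
  · exact ⟨1, by rw [circleDist, h, hd, Int.cast_one,
      integral_abs_step_sub_step_sub_one hu.1 huv hv.2.le]⟩

section Median

variable {α : Type*} [MeasurableSpace α] {μ : Measure α} [IsProbabilityMeasure μ]

lemma integral_abs_sub_le_of_le_of_half_le {f : α → ℝ} (hfm : Measurable f)
    (hfi : Integrable f μ) {a c : ℝ} (hac : a ≤ c) (hc : 1 / 2 ≤ μ.real {x | c ≤ f x}) :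
    ∫ x, |f x - c| ∂μ ≤ ∫ x, |f x - a| ∂μ := by
  set S := {x | c ≤ f x}
  have hS : MeasurableSet S := measurableSet_le measurable_const hfm
  -- `|f - a| - |f - c|` equals `c - a` on `S` and is at least `a - c` off `S`
  have hpt (x : α) : |f x - c| + (c - a) * (2 * S.indicator (1 : α → ℝ) x - 1) ≤ |f x - a| := by
    by_cases hx : x ∈ S
    · have hcx : c ≤ f x := hx
      rw [indicator_of_mem hx, abs_of_nonneg (by linarith), abs_of_nonneg (by linarith)]
      simp only [Pi.one_apply]
      linarith
    · rw [indicator_of_notMem hx]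
      have := abs_sub_abs_le_abs_sub (f x - c) (f x - a)
      rw [show f x - c - (f x - a) = -(c - a) by ring, abs_neg, abs_of_nonneg (sub_nonneg.2 hac)]
        at this
      linarith
  have hind : Integrable (fun x => 2 * S.indicator (1 : α → ℝ) x - 1) μ :=
    (((integrable_const 1).indicator hS).const_mul 2).sub (integrable_const 1)
  have hIc : Integrable (fun x => |f x - c|) μ := (hfi.sub (integrable_const c)).abs
  have hIa : Integrable (fun x => |f x - a|) μ := (hfi.sub (integrable_const a)).abs
  have hmono : ∫ x, (|f x - c| + (c - a) * (2 * S.indicator (1 : α → ℝ) x - 1)) ∂μ ≤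
      ∫ x, |f x - a| ∂μ :=
    integral_mono (hIc.add (hind.const_mul (c - a))) hIa hpt
  have hind_int : ∫ x, (2 * S.indicator (1 : α → ℝ) x - 1) ∂μ = 2 * μ.real S - 1 := by
    rw [integral_sub (((integrable_const 1).indicator hS).const_mul 2) (integrable_const 1),
      integral_const_mul, integral_indicator_one hS]
    simp
  rw [integral_add hIc (hind.const_mul (c - a)), integral_const_mul, hind_int] at hmono
  nlinarith

lemma integral_abs_sub_median_le {f : α → ℝ} (hfm : Measurable f) (hfi : Integrable f μ)
    {c : ℝ} (hc₁ : 1 / 2 ≤ μ.real {x | c ≤ f x}) (hc₂ : 1 / 2 ≤ μ.real {x | f x ≤ c}) (a : ℝ) :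
    ∫ x, |f x - c| ∂μ ≤ ∫ x, |f x - a| ∂μ := by
  rcases le_total a c with hac | hca
  · exact integral_abs_sub_le_of_le_of_half_le hfm hfi hac hc₁
  · have h := integral_abs_sub_le_of_le_of_half_le hfm.neg hfi.neg (neg_le_neg hca)
      (by simpa only [Pi.neg_apply, neg_le_neg_iff] using hc₂)
    simpa only [Pi.neg_apply, neg_sub_neg, abs_sub_comm (f _)] using h

lemma exists_int_median_of_abs_le {f : α → ℤ} (hf : Measurable f) {N : ℤ}
    (hN : ∀ x, |f x| ≤ N) :
    ∃ c : ℤ, μ {x | f x = c} ≠ 0 ∧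
      1 / 2 ≤ μ.real {x | c ≤ f x} ∧ 1 / 2 ≤ μ.real {x | f x ≤ c} := by
  have hmeas (c : ℤ) : MeasurableSet {x | c ≤ f x} := measurableSet_le measurable_const hf
  obtain ⟨c, hc, hmax⟩ := Int.exists_greatest_of_bdd (P := fun c => 1 / 2 ≤ μ.real {x | c ≤ f x})
    ⟨N, fun c hc => by
      by_contra! hNc
      have : {x | c ≤ f x} = ∅ := eq_empty_of_forall_notMem fun x hx =>
        (hN x).not_gt (lt_of_lt_of_le hNc ((le_abs_self _).trans' hx))
      rw [this, measureReal_empty] at hc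
      norm_num at hc⟩
    ⟨-N, by
      rw [show {x | -N ≤ f x} = univ from eq_univ_of_forall fun x => neg_le_of_abs_le (hN x),
        probReal_univ]
      norm_num⟩
  have hnext : μ.real {x | c + 1 ≤ f x} < 1 / 2 := lt_of_not_ge fun h => by
    linarith [hmax _ h]
  have hcompl : {x | f x ≤ c} = {x | c + 1 ≤ f x}ᶜ := by
    ext x; change f x ≤ c ↔ ¬c + 1 ≤ f x; omega
  have hsplit : {x | c ≤ f x} = {x | f x = c} ∪ {x | c + 1 ≤ f x} := by
    ext x; change c ≤ f x ↔ f x = c ∨ c + 1 ≤ f x; omega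
  refine ⟨c, fun h0 => ?_, hc, ?_⟩
  · have := measureReal_union_le (μ := μ) {x | f x = c} {x | c + 1 ≤ f x}
    rw [← hsplit, measureReal_def μ {x | f x = c}, h0, ENNReal.toReal_zero] at this
    linarith
  · rw [hcompl, probReal_compl_eq_one_sub (hmeas _)]
    linarith

lemma exists_int_forall_integral_abs_sub_le {f : α → ℤ} (hf : Measurable f) {N : ℤ}
    (hN : ∀ x, |f x| ≤ N) :
    ∃ c : ℤ, μ {x | f x = c} ≠ 0 ∧ ∀ a : ℝ, ∫ x, |(f x : ℝ) - c| ∂μ ≤ ∫ x, |(f x : ℝ) - a| ∂μ := by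
  obtain ⟨c, hc, hc₁, hc₂⟩ := exists_int_median_of_abs_le (μ := μ) hf hN
  have hfm : Measurable fun x => (f x : ℝ) := measurable_from_top.comp hf
  have hfi : Integrable (fun x => (f x : ℝ)) μ :=
    .of_bound hfm.aestronglyMeasurable N (.of_forall fun x => by
      rw [Real.norm_eq_abs, ← Int.cast_abs]; exact_mod_cast hN x)
  exact ⟨c, hc, integral_abs_sub_median_le hfm hfi (by simpa only [Int.cast_le] using hc₁)
    (by simpa only [Int.cast_le] using hc₂)⟩

end Median

section CountDiff

variable {ι : Type*} [Fintype ι]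

noncomputable def countDiff (x y : ι → ℝ) (t : ℝ) : ℤ :=
  #{i | x i ≤ t} - #{i | y i ≤ t}

lemma countDiff_cast (x y : ι → ℝ) (t : ℝ) :
    (countDiff x y t : ℝ) = ∑ i, (step (x i) t - step (y i) t) := by
  simp [countDiff, step, sum_sub_distrib, sum_boole]

lemma measurable_countDiff (x y : ι → ℝ) : Measurable (countDiff x y) := by
  have hcard (z : ι → ℝ) : Measurable fun t => (#{i | z i ≤ t} : ℤ) := by
    simp only [card_filter]
    push_cast
    exact measurable_sum _ fun i _ => Measurable.ite measurableSet_Ici measurable_const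
      measurable_const
  exact (hcard x).sub (hcard y)

lemma abs_countDiff_le (x y : ι → ℝ) (t : ℝ) : |countDiff x y t| ≤ Fintype.card ι := by
  have hx := card_le_univ {i | x i ≤ t}
  have hy := card_le_univ {i | y i ≤ t}
  rw [countDiff, abs_le]
  omega

end CountDiff

lemma exists_integral_abs_countDiff_sub_le {ι : Type*} [Fintype ι] {r b : ι → ℝ}
    (hr : ∀ i, r i ∈ Ico (0 : ℝ) 1) (hb : ∀ i, b i ∈ Ico (0 : ℝ) 1) (π : Equiv.Perm ι) :
    ∃ e : ℤ, ∫ t in Ico 0 1, |(countDiff r b t : ℝ) - e| ≤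
      ∑ i, circleDist (r i) (b (π i)) := by
  choose e he using fun i => exists_integral_abs_step_sub_step_sub_eq_circleDist (hr i) (hb (π i))
  refine ⟨∑ i, e i, ?_⟩
  have hsplit (t : ℝ) : (countDiff r b t : ℝ) - ((∑ i, e i : ℤ) : ℝ) =
      ∑ i, (step (r i) t - step (b (π i)) t - e i) := by
    rw [countDiff_cast, Int.cast_sum, sum_sub_distrib, sum_sub_distrib, sum_sub_distrib,
      Equiv.sum_comp π fun i => step (b i) t]
  have hint (i : ι) : Integrable (fun t => |step (r i) t - step (b (π i)) t - e i|)
      (volume.restrict (Ico (0 : ℝ) 1)) :=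
    (((integrable_step _).sub (integrable_step _)).sub (integrable_const _)).abs
  calc ∫ t in Ico 0 1, |(countDiff r b t : ℝ) - ((∑ i, e i : ℤ) : ℝ)|
      ≤ ∫ t in Ico 0 1, ∑ i, |step (r i) t - step (b (π i)) t - e i| := by
        refine integral_mono_of_nonneg (.of_forall fun t => abs_nonneg _)
          (integrable_finsetSum _ fun i _ => hint i) (.of_forall fun t => ?_)
        dsimp only
        rw [hsplit]
        exact abs_sum_le_sum_abs _ _
    _ = ∑ i, circleDist (r i) (b (π i)) := by
        rw [integral_finsetSum _ fun i _ => hint i]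
        exact sum_congr rfl fun i _ => he i

section Monotone

variable {ι : Type*} [Fintype ι] [LinearOrder ι] {X Y : ι → ℝ}

lemma abs_sum_step_sub_step_of_monotone (hX : Monotone X) (hY : Monotone Y) (t : ℝ) :
    |∑ k, (step (X k) t - step (Y k) t)| = ∑ k, |step (X k) t - step (Y k) t| := by
  -- a term `-1` at `k` and a term `+1` at `l` would force both `k < l` and `l < k`
  have hsign : (∀ k, 0 ≤ step (X k) t - step (Y k) t) ∨ ∀ k, step (X k) t - step (Y k) t ≤ 0 := by
    by_contra! ⟨⟨k, hk⟩, ⟨l, hl⟩⟩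
    have hk' : Y k ≤ t ∧ t < X k := by unfold step at hk; split_ifs at hk <;> grind
    have hl' : X l ≤ t ∧ t < Y l := by unfold step at hl; split_ifs at hl <;> grind
    exact lt_asymm (hY.reflect_lt (hk'.1.trans_lt hl'.2)) (hX.reflect_lt (hl'.1.trans_lt hk'.2))
  rcases hsign with hpos | hneg
  · rw [abs_sum_of_nonneg fun k _ => hpos k]
    exact sum_congr rfl fun k _ => (abs_of_nonneg (hpos k)).symm
  · rw [← abs_neg, ← sum_neg_distrib, abs_sum_of_nonneg fun k _ => neg_nonneg.2 (hneg k)]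
    exact sum_congr rfl fun k _ => (abs_of_nonpos (hneg k)).symm

lemma sum_abs_sub_eq_integral_of_monotone (hX : Monotone X) (hY : Monotone Y)
    (hX₁ : ∀ k, X k ∈ Ico (0 : ℝ) 1) (hY₁ : ∀ k, Y k ∈ Ico (0 : ℝ) 1) :
    ∑ k, |X k - Y k| = ∫ t in Ico 0 1, |∑ k, (step (X k) t - step (Y k) t)| := by
  simp_rw [abs_sum_step_sub_step_of_monotone hX hY]
  rw [integral_finsetSum (f := fun k t => |step (X k) t - step (Y k) t|) _
    fun k _ => ((integrable_step _).sub (integrable_step _)).abs]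
  exact sum_congr rfl fun k _ => abs_sub_eq_integral_abs_step_sub_step (hX₁ k) (hY₁ k)

end Monotone

section SortMatching

variable {L : ℕ}

noncomputable def sortMatching (x y : Fin L → ℝ) : Equiv.Perm (Fin L) :=
  Tuple.sort y * (Tuple.sort x)⁻¹

@[simp]
lemma sortMatching_apply_sort (x y : Fin L → ℝ) (k : Fin L) :
    sortMatching x y (Tuple.sort x k) = Tuple.sort y k := by
  simp [sortMatching]

variable {x y : Fin L → ℝ}

lemma lt_iff_lt_sortMatching (hx : Function.Injective x) (hy : Function.Injective y)
    (i j : Fin L) : x i < x j ↔ y (sortMatching x y i) < y (sortMatching x y j) := by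
  obtain ⟨k, rfl⟩ := (Tuple.sort x).surjective i
  obtain ⟨l, rfl⟩ := (Tuple.sort x).surjective j
  have hX := (Tuple.monotone_sort x).strictMono_of_injective (hx.comp (Tuple.sort x).injective)
  have hY := (Tuple.monotone_sort y).strictMono_of_injective (hy.comp (Tuple.sort y).injective)
  rw [sortMatching_apply_sort, sortMatching_apply_sort]
  exact hX.lt_iff_lt.trans hY.lt_iff_lt.symm

lemma sum_abs_sub_sortMatching (hx : ∀ i, x i ∈ Ico (0 : ℝ) 1) (hy : ∀ i, y i ∈ Ico (0 : ℝ) 1) :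
    ∑ i, |x i - y (sortMatching x y i)| = ∫ t in Ico 0 1, |(countDiff x y t : ℝ)| := by
  rw [← Equiv.sum_comp (Tuple.sort x)]
  simp_rw [sortMatching_apply_sort]
  have hline := sum_abs_sub_eq_integral_of_monotone (Tuple.monotone_sort x)
    (Tuple.monotone_sort y) (fun k => hx _) (fun k => hy _)
  simp only [Function.comp_apply] at hline
  rw [hline]
  congr 1 with t
  rw [countDiff_cast, sum_sub_distrib, sum_sub_distrib,
    Equiv.sum_comp (Tuple.sort x) fun i => step (x i) t,
    Equiv.sum_comp (Tuple.sort y) fun i => step (y i) t]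

end SortMatching

lemma step_fract_sub {u t₀ t : ℝ} (hu : u ∈ Ico (0 : ℝ) 1) (ht₀ : t₀ ∈ Ico (0 : ℝ) 1)
    (ht₀u : t₀ ≠ u) (ht : t ∈ Ico (0 : ℝ) 1) :
    step (Int.fract (u - t₀)) t = step u (Int.fract (t + t₀)) - step u t₀ + step 1 (t + t₀) := by
  have hfract : Int.fract (t + t₀) = if t + t₀ < 1 then t + t₀ else t + t₀ - 1 := by
    split_ifs with h
    · exact Int.fract_eq_self.2 ⟨by linarith [ht.1, ht₀.1], h⟩
    · exact Int.fract_eq_iff.2 ⟨by linarith, by linarith [ht.2, ht₀.2], 1, by push_cast; ring⟩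
  rw [fract_sub_eq_ite ht₀ hu, hfract]
  obtain ⟨hu0, hu1⟩ := hu
  obtain ⟨ht0, ht1⟩ := ht
  obtain ⟨ht₀0, ht₀1⟩ := ht₀
  unfold step
  rcases ht₀u.lt_or_gt with h | h <;> split_ifs <;> linarith

lemma countDiff_fract_sub {ι : Type*} [Fintype ι] {x y : ι → ℝ}
    (hx : ∀ i, x i ∈ Ico (0 : ℝ) 1) (hy : ∀ i, y i ∈ Ico (0 : ℝ) 1) {t₀ : ℝ}
    (ht₀ : t₀ ∈ Ico (0 : ℝ) 1) (hx₀ : ∀ i, t₀ ≠ x i) (hy₀ : ∀ i, t₀ ≠ y i) {t : ℝ}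
    (ht : t ∈ Ico (0 : ℝ) 1) :
    (countDiff (fun i => Int.fract (x i - t₀)) (fun i => Int.fract (y i - t₀)) t : ℝ) =
      countDiff x y (Int.fract (t + t₀)) - countDiff x y t₀ := by
  rw [countDiff_cast, countDiff_cast, countDiff_cast, ← sum_sub_distrib]
  refine sum_congr rfl fun i _ => ?_
  rw [step_fract_sub (hx i) ht₀ (hx₀ i) ht, step_fract_sub (hy i) ht₀ (hy₀ i) ht]
  ring

lemma integral_comp_fract_add (g : ℝ → ℝ) (s : ℝ) :
    ∫ t in Ico 0 1, g (Int.fract (t + s)) = ∫ t in Ico 0 1, g t := by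
  have hIco (h : ℝ → ℝ) : ∫ t in Ico 0 1, h t = ∫ t in (0 : ℝ)..1, h t := by
    rw [intervalIntegral.integral_of_le zero_le_one, integral_Ico_eq_integral_Ioo,
      integral_Ioc_eq_integral_Ioo]
  have hper : Function.Periodic (fun u => g (Int.fract u)) 1 := (Int.fract_periodic ℝ).comp g
  rw [hIco, hIco, intervalIntegral.integral_comp_add_right (fun u => g (Int.fract u)), zero_add,
    add_comm, hper.intervalIntegral_add_eq s 0, zero_add,
    intervalIntegral.integral_of_le zero_le_one, intervalIntegral.integral_of_le zero_le_one,
    integral_Ioc_eq_integral_Ioo, integral_Ioc_eq_integral_Ioo]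
  exact setIntegral_congr_fun measurableSet_Ioo fun u hu => by
    simp [Int.fract_eq_self.2 ⟨hu.1.le, hu.2⟩]

section CutMatching

variable {L : ℕ}

noncomputable def cutMatching (t₀ : ℝ) (r b : Fin L → ℝ) : Equiv.Perm (Fin L) :=
  sortMatching (fun i => Int.fract (r i - t₀)) (fun i => Int.fract (b i - t₀))

variable {r b : Fin L → ℝ}

lemma sum_circleDist_cutMatching_le (hr : ∀ i, r i ∈ Ico (0 : ℝ) 1)
    (hb : ∀ i, b i ∈ Ico (0 : ℝ) 1) {t₀ : ℝ} (ht₀ : t₀ ∈ Ico (0 : ℝ) 1) (hr₀ : ∀ i, t₀ ≠ r i)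
    (hb₀ : ∀ i, t₀ ≠ b i) :
    ∑ i, circleDist (r i) (b (cutMatching t₀ r b i)) ≤
      ∫ t in Ico 0 1, |(countDiff r b t : ℝ) - countDiff r b t₀| := by
  set π := cutMatching t₀ r b
  calc ∑ i, circleDist (r i) (b (π i))
      = ∑ i, circleDist (Int.fract (r i - t₀)) (Int.fract (b (π i) - t₀)) :=
        sum_congr rfl fun i _ => (circleDist_fract_sub (hr i) (hb _) t₀).symm
    _ ≤ ∑ i, |Int.fract (r i - t₀) - Int.fract (b (π i) - t₀)| :=
        sum_le_sum fun i _ => circleDist_le_abs_sub _ _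
    _ = ∫ t in Ico 0 1,
          |(countDiff (fun i => Int.fract (r i - t₀)) (fun i => Int.fract (b i - t₀)) t : ℝ)| :=
        sum_abs_sub_sortMatching (x := fun i => Int.fract (r i - t₀))
          (y := fun i => Int.fract (b i - t₀)) (fun i => fract_sub_mem_Ico _ _)
          (fun i => fract_sub_mem_Ico _ _)
    _ = ∫ t in Ico 0 1, |(countDiff r b (Int.fract (t + t₀)) : ℝ) - countDiff r b t₀| :=
        setIntegral_congr_fun measurableSet_Ico fun t ht => by
          rw [countDiff_fract_sub hr hb ht₀ hr₀ hb₀ ht]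
    _ = ∫ t in Ico 0 1, |(countDiff r b t : ℝ) - countDiff r b t₀| :=
        integral_comp_fract_add (fun t => |(countDiff r b t : ℝ) - countDiff r b t₀|) t₀

lemma cyclicallyOriented_cutMatching_iff (hr : ∀ i, r i ∈ Ico (0 : ℝ) 1)
    (hb : ∀ i, b i ∈ Ico (0 : ℝ) 1) (hr_inj : Function.Injective r)
    (hb_inj : Function.Injective b) (t₀ : ℝ) {i₁ i₂ i₃ : Fin L} (h₁₂ : i₁ ≠ i₂) (h₁₃ : i₁ ≠ i₃)
    (h₂₃ : i₂ ≠ i₃) :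
    CyclicallyOriented (r i₁) (r i₂) (r i₃) ↔
      CyclicallyOriented (b (cutMatching t₀ r b i₁)) (b (cutMatching t₀ r b i₂))
        (b (cutMatching t₀ r b i₃)) := by
  set π := cutMatching t₀ r b
  have hπb_ne {i j : Fin L} (h : i ≠ j) : b (π i) ≠ b (π j) := hb_inj.ne (π.injective.ne h)
  rw [← cyclicallyOriented_fract_sub_iff (hr _) (hr _) (hr _) (hr_inj.ne h₁₂) (hr_inj.ne h₂₃)
      (hr_inj.ne h₁₃) t₀,
    ← cyclicallyOriented_fract_sub_iff (hb _) (hb _) (hb _) (hπb_ne h₁₂) (hπb_ne h₂₃)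
      (hπb_ne h₁₃) t₀]
  have horder (i j : Fin L) : Int.fract (r i - t₀) < Int.fract (r j - t₀) ↔
      Int.fract (b (π i) - t₀) < Int.fract (b (π j) - t₀) :=
    lt_iff_lt_sortMatching (fun i j h => hr_inj (fract_sub_injOn t₀ (hr i) (hr j) h))
      (fun i j h => hb_inj (fract_sub_injOn t₀ (hb i) (hb j) h)) i j
  exact cyclicallyOriented_congr_of_lt_iff horder i₁ i₂ i₃

end CutMatching

end CircleMatching

open CircleMatching

open Finset in
/-- For `p = 1`, if the `2L` points together with their antipodes are pairwise
distinct, then there exists a cyclic optimal matching on the circle. -/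
theorem exists_cyclic_optimal_circle_matching_p_one
    (L : ℕ) (r b : Fin L → ℝ)
    (hr : ∀ i, r i ∈ Set.Ico (0 : ℝ) 1) (hb : ∀ i, b i ∈ Set.Ico (0 : ℝ) 1)
    (hdist : Function.Injective
      (Sum.elim (Sum.elim r b) (Sum.elim (fun i => antipode (r i)) (fun i => antipode (b i))) :
        (Fin L ⊕ Fin L) ⊕ (Fin L ⊕ Fin L) → ℝ)) :
    ∃ π : Equiv.Perm (Fin L),
      (∀ π' : Equiv.Perm (Fin L),
        ∑ i, circleDist (r i) (b (π i)) ^ (1 : ℝ) ≤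
          ∑ i, circleDist (r i) (b (π' i)) ^ (1 : ℝ)) ∧
      (∀ i₁ i₂ i₃ : Fin L, i₁ ≠ i₂ → i₁ ≠ i₃ → i₂ ≠ i₃ →
        (CyclicallyOriented (r i₁) (r i₂) (r i₃) ↔
          CyclicallyOriented (b (π i₁)) (b (π i₂)) (b (π i₃)))) := by
  have hr_inj : Function.Injective r := fun i j h =>
    Sum.inl_injective (Sum.inl_injective (@hdist (.inl (.inl i)) (.inl (.inl j)) h))
  have hb_inj : Function.Injective b := fun i j h =>
    Sum.inr_injective (Sum.inl_injective (@hdist (.inl (.inr i)) (.inl (.inr j)) h))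
  obtain ⟨c, hc, hc_min⟩ := exists_int_forall_integral_abs_sub_le
    (μ := volume.restrict (Ico (0 : ℝ) 1)) (measurable_countDiff r b) (abs_countDiff_le r b)
  obtain ⟨t₀, hFt₀, ht₀, hr₀, hb₀⟩ :
      ∃ t₀, countDiff r b t₀ = c ∧ t₀ ∈ Ico (0 : ℝ) 1 ∧ (∀ i, t₀ ≠ r i) ∧ ∀ i, t₀ ≠ b i :=
    ((frequently_ae_iff.2 hc).and_eventually ((ae_restrict_mem measurableSet_Ico).and
      ((ae_all_iff.2 fun i => Measure.ae_ne _ (r i)).and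
        (ae_all_iff.2 fun i => Measure.ae_ne _ (b i))))).exists
  refine ⟨cutMatching t₀ r b, fun π => ?_,
    fun i₁ i₂ i₃ => cyclicallyOriented_cutMatching_iff hr hb hr_inj hb_inj t₀⟩
  obtain ⟨e, he⟩ := exists_integral_abs_countDiff_sub_le hr hb π
  simp only [Real.rpow_one]
  calc ∑ i, circleDist (r i) (b (cutMatching t₀ r b i))
      ≤ ∫ t in Ico 0 1, |(countDiff r b t : ℝ) - countDiff r b t₀| :=
        sum_circleDist_cutMatching_le hr hb ht₀ hr₀ hb₀
    _ ≤ ∫ t in Ico 0 1, |(countDiff r b t : ℝ) - e| := hFt₀ ▸ hc_min e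
    _ ≤ ∑ i, circleDist (r i) (b (π i)) := he
end

section
/- For all reals a, b, c > 0, the Gaussian probability density p(x, y) = √((a+b+c)/(a·b·c)) · (2π)^{−1} · exp(−x²/(2a) − (x−y)²/(2b) − y²/(2c)) satisfies ∫_{x ≥ 0} ∫_{y ≥ 0} p(x, y) dx dy = 1/4 + (1/(2π)) · arctan √(a·c / (b·(a+b+c))). -/
/-!
Write the exponent as `-‖R z‖² / 2`, where `R = !![α, -β; 0, δ]` is the Cholesky factor of the
inverse covariance matrix `A`. The substitution `w = R z` maps the quadrant onto the sector
`{w₂ > 0, w₁ + (β/δ) w₂ > 0}` of opening angle `π/2 + arctan (β/δ)`, with Jacobian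
`det R = √(det A)`, and `β/δ = -A₁₂ / √(det A) = √(ac / (b(a+b+c)))`. In polar coordinates the
integral of `exp (-‖w‖² / 2)` over a sector is its opening angle, because
`∫₀^∞ r exp (-r² / 2) dr = 1`.
-/

open Real MeasureTheory Set

theorem integral_Ioi_mul_exp_neg_sq_div_two :
    ∫ r in Ioi (0 : ℝ), r * exp (-r ^ 2 / 2) = 1 := by
  have h := integral_rpow_mul_exp_neg_mul_rpow (p := 2) (q := 1) (b := 1 / 2)
    two_pos (by norm_num) (by norm_num)
  norm_num at h
  convert h using 5 with r
  ring

theorem cos_add_mul_sin_eq_sqrt_mul_cos_sub_arctan (k φ : ℝ) :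
    cos φ + k * sin φ = √(1 + k ^ 2) * cos (φ - arctan k) := by
  rw [cos_sub, cos_arctan, sin_arctan]
  field_simp

theorem sin_pos_and_cos_add_mul_sin_pos_iff (k : ℝ) {φ : ℝ} (hφ : φ ∈ Ioo (-π) π) :
    (0 < sin φ ∧ 0 < cos φ + k * sin φ) ↔ φ ∈ Ioo 0 (π / 2 + arctan k) := by
  have := neg_pi_div_two_lt_arctan k
  have := arctan_lt_pi_div_two k
  rw [cos_add_mul_sin_eq_sqrt_mul_cos_sub_arctan]
  constructor
  · rintro ⟨hsin, hcos⟩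
    have hφ0 : 0 < φ := by
      by_contra! h
      exact hsin.not_ge (sin_nonpos_of_nonpos_of_neg_pi_le h hφ.1.le)
    refine ⟨hφ0, lt_of_not_ge fun h => hcos.not_ge ?_⟩
    exact mul_nonpos_of_nonneg_of_nonpos (sqrt_nonneg _)
      (cos_nonpos_of_pi_div_two_le_of_le (by linarith) (by linarith [hφ.2]))
  · rintro ⟨h0, hθ⟩
    exact ⟨sin_pos_of_pos_of_lt_pi h0 (by linarith),
      mul_pos (sqrt_pos.2 (by positivity)) (cos_pos_of_mem_Ioo ⟨by linarith, by linarith⟩)⟩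

theorem setIntegral_exp_neg_sq_norm_div_two_of_cone {S : Set (ℝ × ℝ)} {s : Set ℝ}
    (hS : MeasurableSet S) (hs : MeasurableSet s) (hsπ : s ⊆ Ioo (-π) π)
    (hmem : ∀ r > 0, ∀ φ ∈ Ioo (-π) π, polarCoord.symm (r, φ) ∈ S ↔ φ ∈ s) :
    ∫ z in S, exp (-(z.1 ^ 2 + z.2 ^ 2) / 2) = volume.real s := by
  have hpolar : ∀ p ∈ polarCoord.target,
      p.1 • S.indicator (fun z => exp (-(z.1 ^ 2 + z.2 ^ 2) / 2)) (polarCoord.symm p)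
        = p.1 * exp (-p.1 ^ 2 / 2) * s.indicator 1 p.2 := by
    rintro ⟨r, φ⟩ ⟨hr, hφ⟩
    by_cases hφs : φ ∈ s
    · rw [indicator_of_mem ((hmem r hr φ hφ).2 hφs), indicator_of_mem hφs, polarCoord_symm_apply]
      simp only [smul_eq_mul, Pi.one_apply, mul_one, mul_pow]
      rw [← mul_add, cos_sq_add_sin_sq, mul_one]
    · rw [indicator_of_notMem (mt (hmem r hr φ hφ).1 hφs), indicator_of_notMem hφs]
      simp
  calc ∫ z in S, exp (-(z.1 ^ 2 + z.2 ^ 2) / 2)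
      = ∫ p in Ioi 0 ×ˢ Ioo (-π) π, p.1 * exp (-p.1 ^ 2 / 2) * s.indicator 1 p.2 := by
        rw [← integral_indicator hS, ← integral_comp_polarCoord_symm]
        exact setIntegral_congr_fun polarCoord.open_target.measurableSet hpolar
    _ = ∫ φ in Ioo (-π) π, s.indicator 1 φ := by
        rw [Measure.volume_eq_prod, setIntegral_prod_mul (fun r : ℝ => r * exp (-r ^ 2 / 2)),
          integral_Ioi_mul_exp_neg_sq_div_two, one_mul]
    _ = volume.real s := by
        rw [setIntegral_indicator hs, inter_eq_right.2 hsπ, Pi.one_def, setIntegral_const,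
          smul_eq_mul, mul_one]

theorem setIntegral_exp_neg_sq_norm_div_two_sector (k : ℝ) :
    ∫ z in {z : ℝ × ℝ | 0 < z.2 ∧ 0 < z.1 + k * z.2}, exp (-(z.1 ^ 2 + z.2 ^ 2) / 2)
      = π / 2 + arctan k := by
  have h₁ := neg_pi_div_two_lt_arctan k
  have h₂ := arctan_lt_pi_div_two k
  have hS : MeasurableSet {z : ℝ × ℝ | 0 < z.2 ∧ 0 < z.1 + k * z.2} :=
    (measurableSet_lt measurable_const measurable_snd).inter
      (measurableSet_lt measurable_const (measurable_fst.add (measurable_snd.const_mul k)))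
  rw [setIntegral_exp_neg_sq_norm_div_two_of_cone (s := Ioo 0 (π / 2 + arctan k)) hS
    measurableSet_Ioo (Ioo_subset_Ioo (by linarith [pi_pos]) (by linarith)),
    Real.volume_real_Ioo_of_le (by linarith), sub_zero]
  intro r hr φ hφ
  rw [← sin_pos_and_cos_add_mul_sin_pos_iff k hφ, polarCoord_symm_apply, mem_ofPred_eq,
    ← mul_assoc, mul_comm k r, mul_assoc, ← mul_add, mul_pos_iff_of_pos_left hr,
    mul_pos_iff_of_pos_left hr]

theorem setIntegral_quadrant_comp_upperTriangular {α δ : ℝ} (β : ℝ) (hα : 0 < α) (hδ : 0 < δ)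
    (g : ℝ × ℝ → ℝ) :
    α * δ * ∫ z in Ioi (0 : ℝ) ×ˢ Ioi (0 : ℝ), g (α * z.1 - β * z.2, δ * z.2)
      = ∫ w in {w : ℝ × ℝ | 0 < w.2 ∧ 0 < w.1 + β / δ * w.2}, g w := by
  let L : ℝ × ℝ →L[ℝ] ℝ × ℝ := LinearMap.toContinuousLinearMap
    (Matrix.toLin (Module.Basis.finTwoProd ℝ) (Module.Basis.finTwoProd ℝ) !![α, -β; 0, δ])
  have hL : ∀ z, L z = (α * z.1 - β * z.2, δ * z.2) := fun z => by
    simp only [L, LinearMap.coe_toContinuousLinearMap', Matrix.toLin_finTwoProd_apply]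
    ring_nf
  have hdet : L.det = α * δ := by
    simp [L, ContinuousLinearMap.det, LinearMap.det_toLin, Matrix.det_fin_two_of]
  have hinj : InjOn L (Ioi 0 ×ˢ Ioi 0) := fun z _ z' _ h => by
    simp only [hL, Prod.mk.injEq] at h
    have h₂ := mul_left_cancel₀ hδ.ne' h.2
    exact Prod.ext (mul_left_cancel₀ hα.ne' (by linarith [h.1, h₂ ▸ h.1])) h₂
  have himage : L '' (Ioi 0 ×ˢ Ioi 0) = {w : ℝ × ℝ | 0 < w.2 ∧ 0 < w.1 + β / δ * w.2} := by
    ext ⟨u, v⟩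
    constructor
    · rintro ⟨⟨x, y⟩, ⟨hx, hy⟩, hxy⟩
      simp only [hL, Prod.mk.injEq] at hxy
      obtain ⟨rfl, rfl⟩ := hxy
      refine ⟨mul_pos hδ hy, ?_⟩
      field_simp
      nlinarith [mul_pos hα hx]
    · rintro ⟨hv, huv⟩
      refine ⟨((u + β / δ * v) / α, v / δ), ⟨div_pos huv hα, div_pos hv hδ⟩, ?_⟩
      rw [hL, Prod.mk.injEq]
      constructor
      · field_simp
        ring
      · field_simp
  rw [← himage, integral_image_eq_integral_abs_det_fderiv_smul volume
    (measurableSet_Ioi.prod measurableSet_Ioi) (fun z _ => L.hasFDerivAt.hasFDerivWithinAt) hinj,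
    hdet, abs_of_pos (mul_pos hα hδ), ← integral_const_mul]
  simp only [hL, smul_eq_mul]

theorem setIntegral_quadrant_exp_neg_sum_sq {α δ : ℝ} (β : ℝ) (hα : 0 < α) (hδ : 0 < δ) :
    ∫ z in Ioi (0 : ℝ) ×ˢ Ioi (0 : ℝ), exp (-((α * z.1 - β * z.2) ^ 2 + (δ * z.2) ^ 2) / 2)
      = (π / 2 + arctan (β / δ)) / (α * δ) := by
  rw [eq_div_iff (mul_pos hα hδ).ne', mul_comm, ← setIntegral_exp_neg_sq_norm_div_two_sector,
    ← setIntegral_quadrant_comp_upperTriangular β hα hδ]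

theorem setIntegral_quadrant_exp_neg_quadratic {p q r : ℝ} (hp : 0 < p)
    (hdet : 0 < p * r - q ^ 2) :
    ∫ z in Ioi (0 : ℝ) ×ˢ Ioi (0 : ℝ), exp (-(p * z.1 ^ 2 + 2 * q * z.1 * z.2 + r * z.2 ^ 2) / 2)
      = (π / 2 + arctan (-q / √(p * r - q ^ 2))) / √(p * r - q ^ 2) := by
  have hsp := sqrt_pos.2 hp
  have hsd := sqrt_pos.2 hdet
  have hsp2 := sq_sqrt hp.le
  have hsd2 := sq_sqrt hdet.le
  -- Cholesky factorization of the form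
  have hform : ∀ z : ℝ × ℝ, p * z.1 ^ 2 + 2 * q * z.1 * z.2 + r * z.2 ^ 2
      = (√p * z.1 - -q / √p * z.2) ^ 2 + (√(p * r - q ^ 2) / √p * z.2) ^ 2 := fun z => by
    field_simp
    rw [hsp2, hsd2]
    ring
  simp_rw [hform]
  rw [setIntegral_quadrant_exp_neg_sum_sq _ hsp (div_pos hsd hsp)]
  field_simp

theorem integrable_exp_neg_sq_div_sub_sq_div_sub_sq_div {a b c : ℝ} (ha : 0 < a) (hb : 0 ≤ b)
    (hc : 0 < c) :
    Integrable fun z : ℝ × ℝ =>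
      exp (-(z.1 ^ 2 / (2 * a)) - (z.1 - z.2) ^ 2 / (2 * b) - z.2 ^ 2 / (2 * c)) := by
  have hdom : Integrable fun z : ℝ × ℝ =>
      exp (-(2 * a)⁻¹ * z.1 ^ 2) * exp (-(2 * c)⁻¹ * z.2 ^ 2) := by
    rw [Measure.volume_eq_prod]
    exact (integrable_exp_neg_mul_sq (by positivity)).mul_prod
      (integrable_exp_neg_mul_sq (by positivity))
  refine hdom.mono' (by fun_prop) (ae_of_all _ fun z => ?_)
  rw [norm_of_nonneg (exp_pos _).le, ← exp_add, exp_le_exp]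
  have : 0 ≤ (z.1 - z.2) ^ 2 / (2 * b) := by positivity
  linarith [show -(2 * a)⁻¹ * z.1 ^ 2 = -(z.1 ^ 2 / (2 * a)) by ring,
    show -(2 * c)⁻¹ * z.2 ^ 2 = -(z.2 ^ 2 / (2 * c)) by ring]

open Real in
/-- For `a, b, c > 0`, the probability that both values of the bivariate Gaussian with
density `√((a+b+c)/(abc))·(2π)⁻¹·exp(−x²/(2a) − (x−y)²/(2b) − y²/(2c))` are
nonnegative equals `1/4 + (1/(2π))·arctan √(ac/(b(a+b+c)))`. -/
theorem gaussian_quadrant_probability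
    (a b c : ℝ) (ha : 0 < a) (hb : 0 < b) (hc : 0 < c) :
    ∫ x in Set.Ici (0 : ℝ), ∫ y in Set.Ici (0 : ℝ),
        Real.sqrt ((a + b + c) / (a * b * c)) / (2 * π) *
          Real.exp (-(x ^ 2 / (2 * a)) - (x - y) ^ 2 / (2 * b) - y ^ 2 / (2 * c))
      = 1 / 4 + (1 / (2 * π)) * Real.arctan (Real.sqrt (a * c / (b * (a + b + c)))) := by
  have hdet : (1 / a + 1 / b) * (1 / b + 1 / c) - (-(1 / b)) ^ 2 = (a + b + c) / (a * b * c) := by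
    field_simp; ring
  have hform : ∀ z : ℝ × ℝ, -(z.1 ^ 2 / (2 * a)) - (z.1 - z.2) ^ 2 / (2 * b) - z.2 ^ 2 / (2 * c)
      = -((1 / a + 1 / b) * z.1 ^ 2 + 2 * -(1 / b) * z.1 * z.2 + (1 / b + 1 / c) * z.2 ^ 2) / 2 :=
    fun z => by field_simp; ring
  have hslope : -(-(1 / b)) / √((a + b + c) / (a * b * c)) = √(a * c / (b * (a + b + c))) := by
    rw [neg_neg, ← sqrt_sq (by positivity : (0 : ℝ) ≤ 1 / b), ← sqrt_div' _ (by positivity)]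
    congr 1
    field_simp
  simp_rw [integral_Ici_eq_integral_Ioi, integral_const_mul]
  rw [← setIntegral_prod _
    (integrable_exp_neg_sq_div_sub_sq_div_sub_sq_div ha hb.le hc).integrableOn,
    ← Measure.volume_eq_prod]
  simp_rw [hform]
  rw [setIntegral_quadrant_exp_neg_quadratic (by positivity) (hdet ▸ by positivity), hdet, hslope]
  have := sqrt_pos.2 (by positivity : 0 < (a + b + c) / (a * b * c))
  field_simp
  ring
end

section
/- For all reals a, b, c > 0, the Gaussian probability density p(x, y) = √((a+b+c)/(a·b·c)) · (2π)^{−1} · exp(−x²/(2a) − (x−y)²/(2b) − y²/(2c)) satisfies ∫_ℝ ∫_ℝ sgn(x·y) · p(x, y) dx dy = (2/π) · arctan √(a·c / (b·(a+b+c))). This is the two-point spin correlation function G(a, b, c) of the optimal matching with open boundary conditions at criticality, in the continuum limit. -/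
/-
Write the exponent as `-Q(x, y) / 2` for the positive definite binary quadratic form
`Q = α x² - 2β x y + γ y²`, with `α = 1/a + 1/b`, `β = 1/b`, `γ = 1/c + 1/b` and determinant
`D = αγ - β² = (a + b + c)/(abc)`. In polar coordinates `Q(r cos θ, r sin θ) = r² q(θ)` and
the radial integral is `∫₀^∞ r e^{-q r²/2} dr = 1/q`, which leaves
`∫_{-π}^{π} sgn(cos θ sin θ) / q(θ) dθ`. The integrand is `π`-periodic, and on `(-π/2, π/2)`
the substitution `t = tan θ` gives the antiderivative `arctan((γ tan θ - β)/√D)/√D` of `1/q`,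
so the angular integral is `4 arctan(β/√D)/√D`; the prefactor `√D/(2π)` turns this into
`(2/π) arctan(β/√D)`.
-/

open Real MeasureTheory Set Filter Topology

lemma Real.measurable_sign : Measurable Real.sign :=
  Measurable.ite measurableSet_Iio measurable_const
    (Measurable.ite measurableSet_Ioi measurable_const measurable_const)

lemma Real.abs_sign_le_one (x : ℝ) : |Real.sign x| ≤ 1 := by
  rcases Real.sign_apply_eq x with h | h | h <;> simp [h]

lemma Real.sign_mul_of_pos {r : ℝ} (hr : 0 < r) (x : ℝ) : Real.sign (r * x) = Real.sign x := by
  rcases lt_trichotomy x 0 with hx | rfl | hx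
  · rw [sign_of_neg hx, sign_of_neg (mul_neg_of_pos_of_neg hr hx)]
  · simp
  · rw [sign_of_pos hx, sign_of_pos (mul_pos hr hx)]

lemma integral_Ioi_mul_exp_neg_mul_sq {k : ℝ} (hk : 0 < k) :
    ∫ r in Ioi (0 : ℝ), r * exp (-k * r ^ 2) = (2 * k)⁻¹ := by
  have h := integral_mul_cexp_neg_mul_sq (b := (k : ℂ)) (by simpa using hk)
  rw [← Complex.ofReal_inj, ← integral_complex_ofReal]
  push_cast
  exact h

def binQuad (α β γ x y : ℝ) : ℝ := α * x ^ 2 - 2 * β * x * y + γ * y ^ 2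

section

variable {α β γ : ℝ} {g : ℝ × ℝ → ℝ} {C : ℝ}

lemma binQuad_mul_mul (r x y : ℝ) :
    binQuad α β γ (r * x) (r * y) = r ^ 2 * binQuad α β γ x y := by
  unfold binQuad; ring

lemma exists_pos_mul_le_binQuad (hγ : 0 < γ) (hD : 0 < α * γ - β ^ 2) :
    ∃ ε > 0, ∀ x y, ε * (x ^ 2 + y ^ 2) ≤ binQuad α β γ x y := by
  have hα : 0 < α := by nlinarith [sq_nonneg β]
  refine ⟨(α * γ - β ^ 2) / (α + γ), by positivity, fun x y => ?_⟩
  -- `(α + γ) Q(x, y) - (αγ - β²)(x² + y²) = (αx - βy)² + (βx - γy)²`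
  rw [div_mul_eq_mul_div, div_le_iff₀ (by positivity)]
  unfold binQuad
  nlinarith [sq_nonneg (α * x - β * y), sq_nonneg (β * x - γ * y)]

lemma exists_pos_le_binQuad_cos_sin (hγ : 0 < γ) (hD : 0 < α * γ - β ^ 2) :
    ∃ ε > 0, ∀ θ, ε ≤ binQuad α β γ (cos θ) (sin θ) := by
  obtain ⟨ε, hε, hle⟩ := exists_pos_mul_le_binQuad hγ hD
  exact ⟨ε, hε, fun θ => by simpa [cos_sq_add_sin_sq] using hle (cos θ) (sin θ)⟩

lemma integrable_mul_exp_neg_binQuad (hγ : 0 < γ) (hD : 0 < α * γ - β ^ 2)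
    (hg : Measurable g) (hgC : ∀ z, |g z| ≤ C) :
    Integrable fun z : ℝ × ℝ => g z * exp (-binQuad α β γ z.1 z.2 / 2) := by
  obtain ⟨ε, hε, hle⟩ := exists_pos_mul_le_binQuad hγ hD
  have hmajor : Integrable fun z : ℝ × ℝ =>
      C * (exp (-(ε / 2) * z.1 ^ 2) * exp (-(ε / 2) * z.2 ^ 2)) :=
    ((integrable_exp_neg_mul_sq (by positivity)).mul_prod
      (integrable_exp_neg_mul_sq (by positivity))).const_mul C
  refine hmajor.mono' (hg.mul (by unfold binQuad; fun_prop)).aestronglyMeasurable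
    (ae_of_all _ fun z => ?_)
  rw [norm_mul, norm_of_nonneg (exp_pos _).le, ← exp_add]
  refine mul_le_mul (hgC z) (exp_le_exp.mpr ?_) (exp_pos _).le ((abs_nonneg _).trans (hgC z))
  nlinarith [hle z.1 z.2]

theorem integral_mul_exp_neg_binQuad (hγ : 0 < γ) (hD : 0 < α * γ - β ^ 2)
    (hg : Measurable g) (hgC : ∀ z, |g z| ≤ C)
    (hg_hom : ∀ r : ℝ, 0 < r → ∀ x y, g (r * x, r * y) = g (x, y)) :
    ∫ z : ℝ × ℝ, g z * exp (-binQuad α β γ z.1 z.2 / 2)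
      = ∫ θ in (-π)..π, g (cos θ, sin θ) / binQuad α β γ (cos θ) (sin θ) := by
  obtain ⟨ε, hε, hle⟩ := exists_pos_le_binQuad_cos_sin hγ hD
  set q := fun θ => binQuad α β γ (cos θ) (sin θ) with hq
  have hpolar : ∀ p ∈ Ioi 0 ×ˢ Ioo (-π) π,
      p.1 • (g (polarCoord.symm p) *
        exp (-binQuad α β γ (polarCoord.symm p).1 (polarCoord.symm p).2 / 2))
        = g (cos p.2, sin p.2) * (p.1 * exp (-(q p.2 / 2) * p.1 ^ 2)) := by
    rintro ⟨r, θ⟩ ⟨hr, -⟩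
    simp only [polarCoord_symm_apply, smul_eq_mul, hg_hom r hr, binQuad_mul_mul, hq]
    ring_nf
  have hint : Integrable
      (fun p : ℝ × ℝ => g (cos p.2, sin p.2) * (p.1 * exp (-(q p.2 / 2) * p.1 ^ 2)))
      ((volume.restrict (Ioi 0)).prod (volume.restrict (Ioo (-π) π))) := by
    have hmajor : Integrable (fun p : ℝ × ℝ => C * ‖p.1 * exp (-(ε / 2) * p.1 ^ 2)‖ * 1)
        ((volume.restrict (Ioi 0)).prod (volume.restrict (Ioo (-π) π))) :=
      ((integrable_mul_exp_neg_mul_sq (by positivity)).norm.const_mul C).restrict.mul_prod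
        (integrableOn_const measure_Ioo_lt_top.ne)
    refine hmajor.mono' ?_ (ae_of_all _ fun p => ?_)
    · exact ((hg.comp (by fun_prop)).mul
        (by simp only [hq, binQuad]; fun_prop)).aestronglyMeasurable
    · rw [mul_one, norm_mul, norm_mul, norm_mul, norm_of_nonneg (exp_pos _).le,
        norm_of_nonneg (exp_pos _).le]
      refine mul_le_mul (hgC _) (mul_le_mul_of_nonneg_left (exp_le_exp.mpr ?_) (norm_nonneg _))
        (by positivity) ((abs_nonneg _).trans (hgC 0))
      nlinarith [hle p.2, sq_nonneg p.1]
  rw [← integral_comp_polarCoord_symm, polarCoord_target,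
    setIntegral_congr_fun (measurableSet_Ioi.prod measurableSet_Ioo) hpolar,
    Measure.volume_eq_prod, ← Measure.prod_restrict, integral_prod_symm _ hint,
    intervalIntegral.integral_of_le (by linarith [pi_pos]), integral_Ioc_eq_integral_Ioo]
  refine setIntegral_congr_fun measurableSet_Ioo fun θ _ => ?_
  have hqθ : 0 < q θ := hε.trans_le (hle θ)
  dsimp only
  rw [integral_const_mul, integral_Ioi_mul_exp_neg_mul_sq (by positivity), hq]
  field_simp

lemma hasDerivAt_arctan_tan_binQuad (hD : 0 < α * γ - β ^ 2) {θ : ℝ} (hθ : cos θ ≠ 0) :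
    HasDerivAt
      (fun θ => arctan ((γ * tan θ - β) / √(α * γ - β ^ 2)) / √(α * γ - β ^ 2))
      (binQuad α β γ (cos θ) (sin θ))⁻¹ θ := by
  set s := √(α * γ - β ^ 2)
  have hs : 0 < s := sqrt_pos.mpr hD
  have hs2 : s ^ 2 = α * γ - β ^ 2 := sq_sqrt hD.le
  have h := (((hasDerivAt_tan hθ).const_mul γ).sub_const β).div_const s |>.arctan |>.div_const s
  refine h.congr_deriv ?_
  have hq : binQuad α β γ (cos θ) (sin θ) ≠ 0 := by
    have : γ * binQuad α β γ (cos θ) (sin θ)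
        = (γ * sin θ - β * cos θ) ^ 2 + s ^ 2 * cos θ ^ 2 := by
      rw [hs2]; unfold binQuad; ring
    refine right_ne_zero_of_mul (a := γ) (ne_of_gt ?_)
    rw [this]
    have := sq_pos_of_ne_zero hθ
    positivity
  rw [tan_eq_sin_div_cos]
  field_simp
  rw [hs2]
  unfold binQuad
  ring

lemma tendsto_arctan_tan_binQuad_left (hγ : 0 < γ) (hD : 0 < α * γ - β ^ 2) :
    Tendsto (fun θ => arctan ((γ * tan θ - β) / √(α * γ - β ^ 2)) / √(α * γ - β ^ 2))
      (𝓝[>] (-(π / 2))) (𝓝 (-(π / 2) / √(α * γ - β ^ 2))) := by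
  have hs : 0 < √(α * γ - β ^ 2) := sqrt_pos.mpr hD
  refine ((tendsto_arctan_atBot.mono_right nhdsWithin_le_nhds).comp ?_).div_const _
  exact (tendsto_atBot_add_const_right _ (-β)
    (tendsto_tan_neg_pi_div_two.const_mul_atBot hγ)).atBot_div_const hs

lemma tendsto_arctan_tan_binQuad_right (hγ : 0 < γ) (hD : 0 < α * γ - β ^ 2) :
    Tendsto (fun θ => arctan ((γ * tan θ - β) / √(α * γ - β ^ 2)) / √(α * γ - β ^ 2))
      (𝓝[<] (π / 2)) (𝓝 (π / 2 / √(α * γ - β ^ 2))) := by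
  have hs : 0 < √(α * γ - β ^ 2) := sqrt_pos.mpr hD
  refine ((tendsto_arctan_atTop.mono_right nhdsWithin_le_nhds).comp ?_).div_const _
  exact (tendsto_atTop_add_const_right _ (-β)
    (tendsto_tan_pi_div_two.const_mul_atTop hγ)).atTop_div_const hs

lemma intervalIntegrable_sign_cos_mul_sin_div_binQuad (hγ : 0 < γ) (hD : 0 < α * γ - β ^ 2)
    (u v : ℝ) :
    IntervalIntegrable (fun θ => Real.sign (cos θ * sin θ) / binQuad α β γ (cos θ) (sin θ))
      volume u v := by
  obtain ⟨ε, hε, hle⟩ := exists_pos_le_binQuad_cos_sin hγ hD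
  have hq θ : 0 < binQuad α β γ (cos θ) (sin θ) := hε.trans_le (hle θ)
  have hcont : Continuous fun θ => binQuad α β γ (cos θ) (sin θ) := by
    unfold binQuad; fun_prop
  refine (hcont.inv₀ fun θ => (hq θ).ne').intervalIntegrable u v |>.mono_fun' ?_ ?_
  · exact ((measurable_sign.comp (by fun_prop)).div hcont.measurable).aestronglyMeasurable
  · refine ae_of_all _ fun θ => ?_
    show ‖_ / _‖ ≤ (binQuad α β γ (cos θ) (sin θ))⁻¹
    rw [norm_div, norm_of_nonneg (hq θ).le, div_eq_mul_inv]
    exact mul_le_of_le_one_left (inv_nonneg.mpr (hq θ).le) (abs_sign_le_one _)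

theorem integral_sign_cos_mul_sin_div_binQuad (hγ : 0 < γ) (hD : 0 < α * γ - β ^ 2) :
    ∫ θ in (-π)..π, Real.sign (cos θ * sin θ) / binQuad α β γ (cos θ) (sin θ)
      = 4 * arctan (β / √(α * γ - β ^ 2)) / √(α * γ - β ^ 2) := by
  set s := √(α * γ - β ^ 2)
  set G := fun θ => Real.sign (cos θ * sin θ) / binQuad α β γ (cos θ) (sin θ) with hG
  set F := fun θ => arctan ((γ * tan θ - β) / s) / s with hF
  have hint : ∀ u v, IntervalIntegrable G volume u v :=
    intervalIntegrable_sign_cos_mul_sin_div_binQuad hγ hD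
  have hper : Function.Periodic G π := fun θ => by
    simp only [hG, cos_add_pi, sin_add_pi, neg_mul_neg, binQuad, even_two, Even.neg_pow]
    ring_nf
  have hF0 : F 0 = -(arctan (β / s) / s) := by
    simp [hF, neg_div, arctan_neg]
  have hF_cont0 : ContinuousAt F 0 :=
    (continuous_arctan.continuousAt.comp
      ((((continuousAt_tan.mpr (by simp)).const_mul γ).sub continuousAt_const).div_const s))
      |>.div_const s
  have h_right : ∫ θ in (0)..(π / 2), G θ = π / 2 / s - F 0 := by
    refine intervalIntegral.integral_eq_sub_of_hasDerivAt_of_tendsto (by positivity)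
      (fun θ hθ => ?_) (hint _ _) (hF_cont0.tendsto.mono_left nhdsWithin_le_nhds)
      (tendsto_arctan_tan_binQuad_right hγ hD)
    have hcos : 0 < cos θ := cos_pos_of_mem_Ioo ⟨by linarith [hθ.1, pi_pos], hθ.2⟩
    have hsin : 0 < sin θ := sin_pos_of_pos_of_lt_pi hθ.1 (by linarith [hθ.2, pi_pos])
    simp only [hG, sign_of_pos (mul_pos hcos hsin), one_div]
    exact hasDerivAt_arctan_tan_binQuad hD hcos.ne'
  have h_left : ∫ θ in (-(π / 2))..0, G θ = -F 0 - -(-(π / 2) / s) := by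
    refine intervalIntegral.integral_eq_sub_of_hasDerivAt_of_tendsto (by linarith [pi_pos])
      (fun θ hθ => ?_) (hint _ _) (tendsto_arctan_tan_binQuad_left hγ hD).neg
      (hF_cont0.neg.tendsto.mono_left nhdsWithin_le_nhds)
    have hcos : 0 < cos θ := cos_pos_of_mem_Ioo ⟨hθ.1, by linarith [hθ.2, pi_pos]⟩
    have hsin : sin θ < 0 := sin_neg_of_neg_of_neg_pi_lt hθ.2 (by linarith [hθ.1, pi_pos])
    simp only [hG, sign_of_neg (mul_neg_of_pos_of_neg hcos hsin), neg_div, one_div]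
    exact (hasDerivAt_arctan_tan_binQuad hD hcos.ne').neg
  calc ∫ θ in (-π)..π, G θ = (∫ θ in (-π)..0, G θ) + ∫ θ in (0)..π, G θ :=
        (intervalIntegral.integral_add_adjacent_intervals (hint _ _) (hint _ _)).symm
    _ = 2 * ((∫ θ in (-(π / 2))..0, G θ) + ∫ θ in (0)..(π / 2), G θ) := by
        have h1 := hper.intervalIntegral_add_eq (-π) (-(π / 2))
        have h2 := hper.intervalIntegral_add_eq 0 (-(π / 2))
        rw [neg_add_cancel, show -(π / 2) + π = π / 2 by ring] at h1
        rw [zero_add, show -(π / 2) + π = π / 2 by ring] at h2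
        rw [h1, h2, intervalIntegral.integral_add_adjacent_intervals (hint _ _) (hint _ _)]
        ring
    _ = 4 * arctan (β / s) / s := by rw [h_left, h_right, hF0]; ring

theorem integral_integral_sign_mul_exp_neg_binQuad (hγ : 0 < γ) (hD : 0 < α * γ - β ^ 2) :
    ∫ x, ∫ y, Real.sign (x * y) * exp (-binQuad α β γ x y / 2)
      = 4 * arctan (β / √(α * γ - β ^ 2)) / √(α * γ - β ^ 2) := by
  have hg : Measurable fun z : ℝ × ℝ => Real.sign (z.1 * z.2) :=
    measurable_sign.comp (by fun_prop)
  have hg_hom (r : ℝ) (hr : 0 < r) (x y : ℝ) :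
      Real.sign (r * x * (r * y)) = Real.sign (x * y) := by
    rw [mul_mul_mul_comm, sign_mul_of_pos (mul_pos hr hr)]
  rw [integral_integral (integrable_mul_exp_neg_binQuad hγ hD hg fun _ => abs_sign_le_one _),
    ← Measure.volume_eq_prod,
    integral_mul_exp_neg_binQuad hγ hD hg (fun _ => abs_sign_le_one _) hg_hom]
  exact integral_sign_cos_mul_sin_div_binQuad hγ hD

end

open Real in
/-- For `a, b, c > 0`, the expectation of `sgn(x·y)` under the bivariate Gaussian with
density `√((a+b+c)/(abc))·(2π)⁻¹·exp(−x²/(2a) − (x−y)²/(2b) − y²/(2c))` equals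
`(2/π)·arctan √(ac/(b(a+b+c)))`: the two-point spin correlation `G(a,b,c)` of the
optimal matching with open boundary conditions at criticality, in the continuum limit. -/
theorem gaussian_sign_correlation_obc
    (a b c : ℝ) (ha : 0 < a) (hb : 0 < b) (hc : 0 < c) :
    ∫ x : ℝ, ∫ y : ℝ,
        Real.sign (x * y) *
          (Real.sqrt ((a + b + c) / (a * b * c)) / (2 * π) *
            Real.exp (-(x ^ 2 / (2 * a)) - (x - y) ^ 2 / (2 * b) - y ^ 2 / (2 * c)))
      = (2 / π) * Real.arctan (Real.sqrt (a * c / (b * (a + b + c)))) := by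
  have hD : (1 / a + 1 / b) * (1 / c + 1 / b) - (1 / b) ^ 2 = (a + b + c) / (a * b * c) := by
    field_simp; ring
  have hexp (x y : ℝ) : -(x ^ 2 / (2 * a)) - (x - y) ^ 2 / (2 * b) - y ^ 2 / (2 * c)
      = -binQuad (1 / a + 1 / b) (1 / b) (1 / c + 1 / b) x y / 2 := by
    unfold binQuad; field_simp; ring
  have hratio : 1 / b / √((a + b + c) / (a * b * c)) = √(a * c / (b * (a + b + c))) := by
    rw [← sqrt_sq (by positivity : 0 ≤ 1 / b), ← sqrt_div (sq_nonneg _)]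
    congr 1
    field_simp
  simp_rw [hexp, mul_left_comm (Real.sign _), integral_const_mul]
  rw [integral_integral_sign_mul_exp_neg_binQuad (by positivity) (hD ▸ by positivity), hD, hratio]
  have hs : 0 < √((a + b + c) / (a * b * c)) := sqrt_pos.mpr (by positivity)
  field_simp
  norm_num
end

section
/- For every real b with 0 < b < 1, one has (1/(1−b)) · ∫₀^{1−b} (2/π) · arctan √(a·(1 − a − b)/b) da = (1 − √b)/(1 + √b). Hence the distance-averaged two-point correlation function of the one-dimensional Grid-Poisson matching with open boundary conditions at criticality, in the continuum limit, equals G_obc(b) = (1 − √b)/(1 + √b), where b is the rescaled distance between the two points. -/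
/-!
Shifting `a` by `R = (1 - b) / 2` turns the integrand into `arctan (√(R² - x²) / c)` on `[-R, R]`
with `c = √b`. Integrating by parts and using
`∫ dx / ((ρ² - x²) √(R² - x²)) = (ρ c)⁻¹ arctan (c x / (ρ √(R² - x²)))`, where `ρ² = c² + R²`,
gives `∫_{-R}^{R} arctan (√(R² - x²) / c) dx = π (ρ - c)`. For `c² = b` and `R = (1 - b) / 2`
one has `ρ = (1 + b) / 2`, so `π (ρ - c) = π (1 - √b)² / 2`, and `1 - b = (1 - √b)(1 + √b)`.
-/

open Real Set

theorem HasDerivAt.arcsin {f : ℝ → ℝ} {f' x : ℝ} (hf : HasDerivAt f f' x) (h : |f x| < 1) :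
    HasDerivAt (fun y => arcsin (f y)) (f' / √(1 - f x ^ 2)) x := by
  obtain ⟨h₁, h₂⟩ := abs_lt.mp h
  exact ((hasDerivAt_arcsin h₁.ne' h₂.ne).comp x hf).congr_deriv (by ring)

section

variable {R c x : ℝ}

theorem hasDerivAt_mul_arctan_sqrt_sq_sub_sq_div (hc : 0 < c) (hx : x ∈ Ioo (-R) R) :
    HasDerivAt (fun y => y * arctan (√(R ^ 2 - y ^ 2) / c))
      (arctan (√(R ^ 2 - x ^ 2) / c) - c * x ^ 2 / (√(R ^ 2 - x ^ 2) * (c ^ 2 + R ^ 2 - x ^ 2)))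
      x := by
  have hs : 0 < R ^ 2 - x ^ 2 := by nlinarith [hx.1, hx.2]
  refine ((hasDerivAt_id' x).mul
    ((((hasDerivAt_pow 2 x).const_sub (R ^ 2)).sqrt hs.ne').div_const c).arctan).congr_deriv ?_
  have hq : 0 < c ^ 2 + R ^ 2 - x ^ 2 := by linarith [sq_pos_of_pos hc]
  have hq' : c ^ 2 + (R ^ 2 - x ^ 2) ≠ 0 := by positivity
  rw [div_pow, sq_sqrt hs.le]
  field_simp
  ring

theorem hasDerivAt_arcsin_div (hR : 0 < R) (hx : x ∈ Ioo (-R) R) :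
    HasDerivAt (fun y => arcsin (y / R)) (1 / √(R ^ 2 - x ^ 2)) x := by
  have habs : |x / R| < 1 := by
    rw [abs_div, abs_of_pos hR, div_lt_one hR]; exact abs_lt.mpr hx
  refine (((hasDerivAt_id' x).div_const R).arcsin habs).congr_deriv ?_
  have : 1 - (x / R) ^ 2 = (R ^ 2 - x ^ 2) / R ^ 2 := by field_simp
  rw [this, sqrt_div' _ (sq_nonneg R), sqrt_sq hR.le]
  field_simp

theorem hasDerivAt_arcsin_mul_div_mul_sqrt (hR : 0 < R) (hc : 0 < c) (hx : x ∈ Ioo (-R) R) :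
    HasDerivAt (fun y => arcsin (c * y / (R * √(c ^ 2 + R ^ 2 - y ^ 2))))
      (c * √(c ^ 2 + R ^ 2) / (√(R ^ 2 - x ^ 2) * (c ^ 2 + R ^ 2 - x ^ 2))) x := by
  have hs : 0 < R ^ 2 - x ^ 2 := by nlinarith [hx.1, hx.2]
  have hq : 0 < c ^ 2 + R ^ 2 - x ^ 2 := by linarith [sq_pos_of_pos hc]
  set q := √(c ^ 2 + R ^ 2 - x ^ 2)
  have hq' : 0 < q := sqrt_pos.mpr hq
  have hq2 : q ^ 2 = c ^ 2 + R ^ 2 - x ^ 2 := sq_sqrt hq.le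
  have hw : HasDerivAt (fun y => c * y / (R * √(c ^ 2 + R ^ 2 - y ^ 2)))
      (c * (c ^ 2 + R ^ 2) / (R * q ^ 3)) x := by
    refine (((hasDerivAt_id' x).const_mul c).div
      ((((hasDerivAt_pow 2 x).const_sub (c ^ 2 + R ^ 2)).sqrt hq.ne').const_mul R)
      (by positivity)).congr_deriv ?_
    field_simp
    rw [show √(c ^ 2 + R ^ 2 - x ^ 2) = q from rfl, hq2]
    push_cast
    ring
  have hone : 1 - (c * x / (R * q)) ^ 2 = (c ^ 2 + R ^ 2) * (R ^ 2 - x ^ 2) / (R * q) ^ 2 := by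
    rw [div_pow, mul_pow, mul_pow, hq2]; field_simp; ring
  have habs : |c * x / (R * q)| < 1 := by
    have : 0 < 1 - (c * x / (R * q)) ^ 2 := by rw [hone]; positivity
    exact sq_lt_one_iff_abs_lt_one _ |>.mp (by linarith)
  refine (hw.arcsin habs).congr_deriv ?_
  rw [hone, sqrt_div' _ (sq_nonneg _), sqrt_sq (by positivity), sqrt_mul (by positivity)]
  field_simp
  rw [hq2, sq_sqrt (by positivity)]
  ring

/-- The last term is `ρ arctan (c x / (ρ √(R² - x²)))` rewritten as an `arcsin`, so that it stays
continuous at `x = ± R`. -/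
noncomputable def semicircleArctanPrimitive (R c x : ℝ) : ℝ :=
  x * arctan (√(R ^ 2 - x ^ 2) / c) - c * arcsin (x / R)
    + √(c ^ 2 + R ^ 2) * arcsin (c * x / (R * √(c ^ 2 + R ^ 2 - x ^ 2)))

theorem hasDerivAt_semicircleArctanPrimitive (hR : 0 < R) (hc : 0 < c) (hx : x ∈ Ioo (-R) R) :
    HasDerivAt (semicircleArctanPrimitive R c) (arctan (√(R ^ 2 - x ^ 2) / c)) x := by
  have hq : 0 < c ^ 2 + R ^ 2 - x ^ 2 := by nlinarith [hx.1, hx.2]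
  refine (((hasDerivAt_mul_arctan_sqrt_sq_sub_sq_div hc hx).sub
    ((hasDerivAt_arcsin_div hR hx).const_mul c)).add
    ((hasDerivAt_arcsin_mul_div_mul_sqrt hR hc hx).const_mul _)).congr_deriv ?_
  have hρ : √(c ^ 2 + R ^ 2) ^ 2 = c ^ 2 + R ^ 2 := sq_sqrt (by positivity)
  field_simp
  rw [hρ]
  ring

theorem continuousOn_semicircleArctanPrimitive (hR : 0 < R) (hc : 0 < c) :
    ContinuousOn (semicircleArctanPrimitive R c) (Icc (-R) R) := by
  have hq : ∀ y ∈ Icc (-R) R, R * √(c ^ 2 + R ^ 2 - y ^ 2) ≠ 0 := fun y hy =>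
    (mul_pos hR (sqrt_pos.mpr (by nlinarith [hy.1, hy.2]))).ne'
  unfold semicircleArctanPrimitive
  fun_prop (disch := assumption)

theorem semicircleArctanPrimitive_neg (R c x : ℝ) :
    semicircleArctanPrimitive R c (-x) = -semicircleArctanPrimitive R c x := by
  simp only [semicircleArctanPrimitive, neg_sq, neg_div, mul_neg, arcsin_neg]
  ring

theorem semicircleArctanPrimitive_self (hR : 0 < R) (hc : 0 < c) :
    semicircleArctanPrimitive R c R = π / 2 * (√(c ^ 2 + R ^ 2) - c) := by
  have : c * R / (R * √(c ^ 2 + R ^ 2 - R ^ 2)) = 1 := by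
    rw [add_sub_cancel_right, sqrt_sq hc.le]; field_simp
  simp only [semicircleArctanPrimitive, sub_self, sqrt_zero, zero_div, arctan_zero, mul_zero,
    div_self hR.ne', arcsin_one, this]
  ring

theorem integral_arctan_sqrt_sq_sub_sq_div (hR : 0 < R) (hc : 0 < c) :
    ∫ x in -R..R, arctan (√(R ^ 2 - x ^ 2) / c) = π * (√(c ^ 2 + R ^ 2) - c) := by
  rw [intervalIntegral.integral_eq_sub_of_hasDerivAt_of_le (by linarith)
    (continuousOn_semicircleArctanPrimitive hR hc)
    (fun x hx => hasDerivAt_semicircleArctanPrimitive hR hc hx)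
    (by apply Continuous.intervalIntegrable; fun_prop),
    semicircleArctanPrimitive_neg, semicircleArctanPrimitive_self hR hc]
  ring

end

theorem integral_arctan_sqrt_mul_sub_div {b : ℝ} (hb0 : 0 < b) (hb1 : b < 1) :
    ∫ a in (0 : ℝ)..(1 - b), arctan (√(a * (1 - a - b) / b)) = π / 2 * (1 - √b) ^ 2 := by
  have hR : 0 < (1 - b) / 2 := by linarith
  have hu : 0 < √b := sqrt_pos.mpr hb0
  calc ∫ a in (0 : ℝ)..(1 - b), arctan (√(a * (1 - a - b) / b))
      = ∫ a in (0 : ℝ)..(1 - b),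
          arctan (√(((1 - b) / 2) ^ 2 - (a - (1 - b) / 2) ^ 2) / √b) := by
        congr 1 with a
        rw [← sqrt_div' _ hb0.le]
        ring_nf
    _ = ∫ x in -((1 - b) / 2)..(1 - b) / 2, arctan (√(((1 - b) / 2) ^ 2 - x ^ 2) / √b) := by
        rw [intervalIntegral.integral_comp_sub_right
          (fun x => arctan (√(((1 - b) / 2) ^ 2 - x ^ 2) / √b))]
        congr 1 <;> ring
    _ = π * (√(√b ^ 2 + ((1 - b) / 2) ^ 2) - √b) := integral_arctan_sqrt_sq_sub_sq_div hR hu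
    _ = π / 2 * (1 - √b) ^ 2 := by
        rw [sq_sqrt hb0.le, show b + ((1 - b) / 2) ^ 2 = ((1 + b) / 2) ^ 2 by ring,
          sqrt_sq (by linarith)]
        linear_combination -(π / 2) * sq_sqrt hb0.le

open Real in
/-- The distance-averaged two-point correlation function of the one-dimensional
Grid-Poisson matching with open boundary conditions at criticality, in the continuum
limit: for `0 < b < 1`,
`(1/(1−b)) ∫₀^{1−b} (2/π) arctan √(a(1−a−b)/b) da = (1 − √b)/(1 + √b)`. -/
theorem averaged_correlation_obc (b : ℝ) (hb0 : 0 < b) (hb1 : b < 1) :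
    (1 / (1 - b)) * ∫ a in (0 : ℝ)..(1 - b),
        (2 / π) * Real.arctan (Real.sqrt (a * (1 - a - b) / b))
      = (1 - Real.sqrt b) / (1 + Real.sqrt b) := by
  rw [intervalIntegral.integral_const_mul, integral_arctan_sqrt_mul_sub_div hb0 hb1]
  have hu1 : √b < 1 := (sqrt_lt' one_pos).mpr (by simpa using hb1)
  have hfactor : 1 - b = (1 - √b) * (1 + √b) := by linear_combination sq_sqrt hb0.le
  rw [hfactor]
  field_simp [(by linarith : 1 - √b ≠ 0), (by linarith [sqrt_nonneg b] : 1 + √b ≠ 0)]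
end
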